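/- arXiv:1203.4422 — 3 statements merged into one kernel-verified Lean document; each statement's English description precedes it below -/
import Mathlib

section
/- Cross-domain regression (Section 5.1): if B = {0} (no labeled examples from the second domain), then the single-domain minimax-regret estimator of Y from X₁ is ρ_S(X₁) = E_ν[φ_A(X₁)|X₁] = φ_A(X₁); that is, φ_A minimizes sup_{F∈𝓕} REG₁(F,ρ) over all square-integrable Borel functions ρ:ℝ^{M₁}→ℝ^N, so knowledge of the joint law ν of (X₁,X₂) cannot improve upon φ_A from a worst-case perspective. -/
open MeasureTheory
open scoped RealInnerProductSpace

noncomputable section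

abbrev Euc (k : ℕ) : Type := EuclideanSpace ℝ (Fin k)

abbrev XSp (M₁ M₂ : ℕ) : Type := Euc M₁ × Euc M₂

abbrev ΩSp (M₁ M₂ N : ℕ) : Type := XSp M₁ M₂ × Euc N

/-- Mean square error of a (multi-domain) estimator `ρ` under joint law `F` of `((X₁,X₂),Y)`. -/
def MSE {M₁ M₂ N : ℕ} (F : Measure (ΩSp M₁ M₂ N)) (ρ : XSp M₁ M₂ → Euc N) : ℝ :=
  ∫ ω, ‖ω.2 - ρ ω.1‖ ^ 2 ∂F

/-- The class `C = A + B` of estimators `(x₁,x₂) ↦ φ(x₁) + ψ(x₂)`, `φ ∈ A`, `ψ ∈ B`. -/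
def Cset {M₁ M₂ N : ℕ} (A : Submodule ℝ (Euc M₁ → Euc N)) (B : Submodule ℝ (Euc M₂ → Euc N)) :
    Set (XSp M₁ M₂ → Euc N) :=
  {ρ | ∃ φ ∈ A, ∃ ψ ∈ B, ρ = fun x => φ x.1 + ψ x.2}

/-- The family `𝓕` of joint distributions consistent with the partial knowledge
`(ν, φ_A, ψ_B, c)`. -/
def SetF {M₁ M₂ N : ℕ} (ν : Measure (XSp M₁ M₂))
    (A : Submodule ℝ (Euc M₁ → Euc N)) (B : Submodule ℝ (Euc M₂ → Euc N))
    (φA : Euc M₁ → Euc N) (ψB : Euc M₂ → Euc N) (c : ℝ) :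
    Set (Measure (ΩSp M₁ M₂ N)) :=
  {F | IsProbabilityMeasure F ∧ F.map Prod.fst = ν ∧
    MemLp (fun ω : ΩSp M₁ M₂ N => ω.2) 2 F ∧
    (∀ φ ∈ A, MSE F (fun x => φA x.1) ≤ MSE F (fun x => φ x.1)) ∧
    (∀ ψ ∈ B, MSE F (fun x => ψB x.2) ≤ MSE F (fun x => ψ x.2)) ∧
    ∫ ω, ‖ω.2‖ ^ 2 ∂F = c}

/-- The σ-algebra generated by `(X₁,X₂)` on the sample space. -/
def sigmaX (M₁ M₂ N : ℕ) : MeasurableSpace (ΩSp M₁ M₂ N) :=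
  MeasurableSpace.comap Prod.fst inferInstance

/-- The σ-algebra generated by `X₁` on the sample space. -/
def sigmaX1 (M₁ M₂ N : ℕ) : MeasurableSpace (ΩSp M₁ M₂ N) :=
  MeasurableSpace.comap (fun ω => ω.1.1) inferInstance

/-- The σ-algebra generated by `X₁` on the `(X₁,X₂)`-space. -/
def sigmaX1' (M₁ M₂ : ℕ) : MeasurableSpace (XSp M₁ M₂) :=
  MeasurableSpace.comap Prod.fst inferInstance

/-- Multi-domain regret of `ρ(X₁,X₂)`: its MSE minus that of `E_F[Y | X₁,X₂]`. -/
def REG {M₁ M₂ N : ℕ} (F : Measure (ΩSp M₁ M₂ N)) (ρ : XSp M₁ M₂ → Euc N) : ℝ :=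
  MSE F ρ - ∫ ω, ‖ω.2 - condExp (sigmaX M₁ M₂ N) F (fun ω' => ω'.2) ω‖ ^ 2 ∂F

/-- Mean square error of a single-domain estimator `ρ(X₁)`. -/
def MSE1 {M₁ M₂ N : ℕ} (F : Measure (ΩSp M₁ M₂ N)) (ρ : Euc M₁ → Euc N) : ℝ :=
  ∫ ω, ‖ω.2 - ρ ω.1.1‖ ^ 2 ∂F

/-- Single-domain regret of `ρ(X₁)`: its MSE minus that of `E_F[Y | X₁]`. -/
def REG1 {M₁ M₂ N : ℕ} (F : Measure (ΩSp M₁ M₂ N)) (ρ : Euc M₁ → Euc N) : ℝ :=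
  MSE1 F ρ - ∫ ω, ‖ω.2 - condExp (sigmaX1 M₁ M₂ N) F (fun ω' => ω'.2) ω‖ ^ 2 ∂F

lemma comap_rigid {α β γ : Type*} {mβ : MeasurableSpace β} {mγ : MeasurableSpace γ}
    [MeasurableSingletonClass γ] {f : α → β} {g : α → γ}
    (hg : @Measurable α γ (MeasurableSpace.comap f mβ) mγ g) {a a' : α}
    (h : f a = f a') : g a = g a' := by
  obtain ⟨t, ht, hpre⟩ := hg (measurableSet_singleton (g a))
  have ha : a ∈ f ⁻¹' t := by
    rw [hpre]; exact rfl
  have ha' : a' ∈ f ⁻¹' t := by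
    simp only [Set.mem_preimage] at ha ⊢; rwa [← h]
  rw [hpre] at ha'
  exact ha'.symm

lemma integrable_inner2 {Ω : Type*} {N : ℕ} [MeasurableSpace Ω] {F : Measure Ω}
    {f g : Ω → Euc N} (hf : MemLp f 2 F) (hg : MemLp g 2 F) :
    Integrable (fun ω => ⟪f ω, g ω⟫) F := by
  refine Integrable.mono' (hf.norm.integrable_sq.add hg.norm.integrable_sq)
    (hf.aestronglyMeasurable.inner hg.aestronglyMeasurable) (ae_of_all _ fun ω => ?_)
  have h1 := abs_real_inner_le_norm (f ω) (g ω)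
  have h2 := norm_nonneg (f ω)
  have h3 := norm_nonneg (g ω)
  rw [Real.norm_eq_abs, Pi.add_apply]
  nlinarith [sq_nonneg (‖f ω‖ - ‖g ω‖), sq_nonneg (‖f ω‖ + ‖g ω‖)]

lemma integral_norm_sub_sq {Ω : Type*} {N : ℕ} [MeasurableSpace Ω] {F : Measure Ω}
    {f g : Ω → Euc N} (hf : MemLp f 2 F) (hg : MemLp g 2 F) :
    ∫ ω, ‖f ω - g ω‖ ^ 2 ∂F
      = ∫ ω, ‖f ω‖ ^ 2 ∂F - 2 * ∫ ω, ⟪f ω, g ω⟫ ∂F + ∫ ω, ‖g ω‖ ^ 2 ∂F := by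
  have h1 : Integrable (fun ω => ‖f ω‖ ^ 2) F := hf.norm.integrable_sq
  have h2 : Integrable (fun ω => ‖g ω‖ ^ 2) F := hg.norm.integrable_sq
  have h3 : Integrable (fun ω => ⟪f ω, g ω⟫) F := integrable_inner2 hf hg
  have e : ∀ ω, ‖f ω - g ω‖ ^ 2 = ‖f ω‖ ^ 2 - 2 * ⟪f ω, g ω⟫ + ‖g ω‖ ^ 2 :=
    fun ω => norm_sub_sq_real (f ω) (g ω)
  have h5 : Integrable (fun ω => 2 * ⟪f ω, g ω⟫) F := h3.const_mul 2
  have h4 : Integrable (fun ω => ‖f ω‖ ^ 2 - 2 * ⟪f ω, g ω⟫) F := h1.sub h5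
  rw [integral_congr_ae (ae_of_all _ e), integral_add h4 h2, integral_sub h1 h5,
    integral_const_mul]

lemma quad_zero {a b : ℝ} (hb : 0 ≤ b) (h : ∀ t : ℝ, 0 ≤ t ^ 2 * b - 2 * t * a) : a = 0 := by
  rcases eq_or_lt_of_le hb with hb0 | hb0
  · nlinarith [h 1, h (-1)]
  · have key := h (a / b)
    have hbne : b ≠ 0 := ne_of_gt hb0
    have e : (a / b) ^ 2 * b - 2 * (a / b) * a = -(a ^ 2) / b := by
      field_simp; ring
    rw [e] at key
    have : 0 ≤ -(a ^ 2) := by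
      by_contra hcon
      push_neg at hcon
      nlinarith [div_neg_of_neg_of_pos hcon hb0]
    nlinarith [sq_nonneg a]

lemma para_ineq {N : ℕ} (y a r : Euc N) :
    2 * ‖y - a‖ ^ 2 ≤ ‖y - r‖ ^ 2 + ‖(2:ℝ) • a - y - r‖ ^ 2 := by
  have e1 : y - r = (y - a) + (a - r) := by abel
  have e2 : (2:ℝ) • a - y - r = (a - r) - (y - a) := by
    rw [two_smul]; abel
  rw [e1, e2, norm_sub_rev (a - r) (y - a)]
  simp only [pow_two]
  nlinarith [parallelogram_law_with_norm ℝ (y - a) (a - r), mul_self_nonneg ‖a - r‖]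


set_option maxHeartbeats 2000000 in
/-- Section 5.1, cross-domain regression: if `B = {0}` then the
single-domain minimax-regret estimator of `Y` from `X₁` is
`ρ_S(X₁) = E_ν[φ_A(X₁)|X₁] = φ_A(X₁)`: the worst-case single-domain regret of `φ_A` is no
larger than that of any square-integrable Borel estimator `ρ(X₁)`, so knowledge of `ν`
cannot improve upon `φ_A` from a worst-case perspective. -/
theorem stmt_14
    (M₁ M₂ N : ℕ) (hM₁ : 0 < M₁) (hM₂ : 0 < M₂) (hN : 0 < N)
    (ν : Measure (XSp M₁ M₂)) (hνp : IsProbabilityMeasure ν)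
    (hνmom : MemLp (id : XSp M₁ M₂ → XSp M₁ M₂) 2 ν)
    (A : Submodule ℝ (Euc M₁ → Euc N))
    (hAmeas : ∀ φ ∈ A, Measurable φ)
    (hAL2 : ∀ φ ∈ A, MemLp φ 2 (ν.map Prod.fst))
    (φA : Euc M₁ → Euc N) (hφA : φA ∈ A)
    (c : ℝ) (hc : 0 < c)
    (hne : (SetF ν A (⊥ : Submodule ℝ (Euc M₂ → Euc N)) φA 0 c).Nonempty) :
    ∀ ρ : Euc M₁ → Euc N, Measurable ρ → MemLp ρ 2 (ν.map Prod.fst) →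
      (⨆ F ∈ SetF ν A (⊥ : Submodule ℝ (Euc M₂ → Euc N)) φA 0 c, REG1 F φA) ≤
        ⨆ F ∈ SetF ν A (⊥ : Submodule ℝ (Euc M₂ → Euc N)) φA 0 c, REG1 F ρ := by
  intro ρ hρm hρ2
  haveI : Nonempty (Measure (ΩSp M₁ M₂ N)) := ⟨0⟩
  set S := SetF ν A (⊥ : Submodule ℝ (Euc M₂ → Euc N)) φA 0 c with hSdef
  have hπm : Measurable (fun ω : ΩSp M₁ M₂ N => ω.1.1) := measurable_fst.fst
  have hφAm : Measurable φA := hAmeas φA hφA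
  have hm : sigmaX1 M₁ M₂ N ≤ (inferInstance : MeasurableSpace (ΩSp M₁ M₂ N)) :=
    measurable_iff_comap_le.mp hπm
  have hπm1 : @Measurable _ _ (sigmaX1 M₁ M₂ N) _ (fun ω : ΩSp M₁ M₂ N => ω.1.1) :=
    measurable_iff_comap_le.mpr le_rfl
  set Iρ : ℝ := ∫ x, ‖ρ x‖ ^ 2 ∂(ν.map Prod.fst) with hIρ
  -- pushforward of the first coordinate
  have hmapπ : ∀ G : Measure (ΩSp M₁ M₂ N), G.map Prod.fst = ν →
      G.map (fun ω => ω.1.1) = ν.map Prod.fst := by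
    intro G hG
    have e : G.map (fun ω : ΩSp M₁ M₂ N => ω.1.1)
        = G.map (Prod.fst ∘ Prod.fst) := rfl
    rw [e, ← Measure.map_map measurable_fst measurable_fst, hG]
  have hcompL2 : ∀ G : Measure (ΩSp M₁ M₂ N), G.map Prod.fst = ν →
      ∀ ξ : Euc M₁ → Euc N, MemLp ξ 2 (ν.map Prod.fst) →
      MemLp (fun ω : ΩSp M₁ M₂ N => ξ ω.1.1) 2 G := by
    intro G hG ξ hξ
    have h1 : MemLp ξ 2 (G.map (fun ω : ΩSp M₁ M₂ N => ω.1.1)) := by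
      rw [hmapπ G hG]; exact hξ
    exact (memLp_map_measure_iff h1.aestronglyMeasurable hπm.aemeasurable).mp h1
  have hinttrans : ∀ G : Measure (ΩSp M₁ M₂ N), G.map Prod.fst = ν →
      ∫ ω, ‖ρ ω.1.1‖ ^ 2 ∂G = Iρ := by
    intro G hG
    have h1 : AEStronglyMeasurable (fun x => ‖ρ x‖ ^ 2)
        (G.map (fun ω : ΩSp M₁ M₂ N => ω.1.1)) := by
      rw [hmapπ G hG]; exact hρ2.norm.integrable_sq.aestronglyMeasurable
    rw [hIρ, ← hmapπ G hG, integral_map hπm.aemeasurable h1]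
  have hCE0 : ∀ G : Measure (ΩSp M₁ M₂ N),
      0 ≤ ∫ ω, ‖ω.2 - condExp (sigmaX1 M₁ M₂ N) G (fun ω' => ω'.2) ω‖ ^ 2 ∂G :=
    fun G => integral_nonneg fun ω => sq_nonneg _
  -- uniform bound on the regret of ρ over S
  have hbound : ∀ G ∈ S, REG1 G ρ ≤ 2 * c + 2 * Iρ := by
    intro G hG
    obtain ⟨hGp, hGmap, hGY2, -, -, hGc⟩ := hG
    haveI := hGp
    have hρπ : MemLp (fun ω : ΩSp M₁ M₂ N => ρ ω.1.1) 2 G := hcompL2 G hGmap ρ hρ2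
    have hYρ : Integrable (fun ω : ΩSp M₁ M₂ N => ‖ω.2 - ρ ω.1.1‖ ^ 2) G :=
      (hGY2.sub hρπ).norm.integrable_sq
    have i1 : Integrable (fun ω : ΩSp M₁ M₂ N => 2 * ‖ω.2‖ ^ 2) G :=
      hGY2.norm.integrable_sq.const_mul 2
    have i2 : Integrable (fun ω : ΩSp M₁ M₂ N => 2 * ‖ρ ω.1.1‖ ^ 2) G :=
      hρπ.norm.integrable_sq.const_mul 2
    have h2' : Integrable (fun ω : ΩSp M₁ M₂ N => 2 * ‖ω.2‖ ^ 2 + 2 * ‖ρ ω.1.1‖ ^ 2) G :=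
      i1.add i2
    have hmono : ∫ ω, ‖ω.2 - ρ ω.1.1‖ ^ 2 ∂G
        ≤ ∫ ω, (2 * ‖ω.2‖ ^ 2 + 2 * ‖ρ ω.1.1‖ ^ 2) ∂G := by
      refine integral_mono hYρ h2' fun ω => ?_
      nlinarith [norm_sub_le ω.2 (ρ ω.1.1), norm_nonneg ω.2, norm_nonneg (ρ ω.1.1),
        norm_nonneg (ω.2 - ρ ω.1.1), sq_nonneg (‖ω.2‖ - ‖ρ ω.1.1‖)]
    have hsplit : ∫ ω, (2 * ‖ω.2‖ ^ 2 + 2 * ‖ρ ω.1.1‖ ^ 2) ∂G = 2 * c + 2 * Iρ := by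
      rw [integral_add i1 i2, integral_const_mul, integral_const_mul, hGc,
        hinttrans G hGmap]
    have r : REG1 G ρ = (∫ ω, ‖ω.2 - ρ ω.1.1‖ ^ 2 ∂G)
        - ∫ ω, ‖ω.2 - condExp (sigmaX1 M₁ M₂ N) G (fun ω' => ω'.2) ω‖ ^ 2 ∂G := rfl
    rw [r]
    linarith [hCE0 G, hmono, hsplit]
  -- boundedness of the RHS family
  have hKbdd : BddAbove (Set.range fun G : Measure (ΩSp M₁ M₂ N) =>
      ⨆ _ : G ∈ S, REG1 G ρ) := by
    refine ⟨max 0 (2 * c + 2 * Iρ), ?_⟩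
    rintro x ⟨G, rfl⟩
    show (⨆ _ : G ∈ S, REG1 G ρ) ≤ max 0 (2 * c + 2 * Iρ)
    by_cases hG : G ∈ S
    · rw [ciSup_pos hG]
      exact le_max_of_le_right (hbound G hG)
    · haveI : IsEmpty (G ∈ S) := ⟨hG⟩
      rw [Real.iSup_of_isEmpty]
      exact le_max_left _ _
  have hsupmem : ∀ G ∈ S, REG1 G ρ ≤ ⨆ G' : Measure (ΩSp M₁ M₂ N), ⨆ _ : G' ∈ S, REG1 G' ρ := by
    intro G hG
    have h' : (⨆ _ : G ∈ S, REG1 G ρ)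
        ≤ ⨆ G' : Measure (ΩSp M₁ M₂ N), ⨆ _ : G' ∈ S, REG1 G' ρ := le_ciSup hKbdd G
    rwa [ciSup_pos hG] at h'
  -- the key step
  have key : ∀ F, F ∈ S →
      REG1 F φA ≤ ⨆ G' : Measure (ΩSp M₁ M₂ N), ⨆ _ : G' ∈ S, REG1 G' ρ := by
    intro F hFS
    obtain ⟨hFp, hFmap, hFY2, hFmin, -, hFc⟩ := hFS
    have hFS' : F ∈ S := by
      exact ⟨hFp, hFmap, hFY2, hFmin, by rintro ψ hψ; rw [(Submodule.mem_bot ℝ).mp hψ], hFc⟩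
    haveI := hFp
    have hvL2 : MemLp (fun ω : ΩSp M₁ M₂ N => φA ω.1.1) 2 F := hcompL2 F hFmap φA (hAL2 φA hφA)
    have hρπ2 : MemLp (fun ω : ΩSp M₁ M₂ N => ρ ω.1.1) 2 F := hcompL2 F hFmap ρ hρ2
    have hvint : Integrable (fun ω : ΩSp M₁ M₂ N => φA ω.1.1) F := hvL2.integrable one_le_two
    have hYint : Integrable (fun ω : ΩSp M₁ M₂ N => ω.2) F := hFY2.integrable one_le_two
    -- orthogonality: J = K
    have hMSEφA : MSE F (fun x => φA x.1) = ∫ ω, ‖ω.2 - φA ω.1.1‖ ^ 2 ∂F := rfl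
    have hexp0 : ∫ ω, ‖ω.2 - φA ω.1.1‖ ^ 2 ∂F
        = (∫ ω, ‖ω.2‖ ^ 2 ∂F) - 2 * (∫ ω, ⟪ω.2, φA ω.1.1⟫ ∂F)
          + ∫ ω, ‖φA ω.1.1‖ ^ 2 ∂F := integral_norm_sub_sq hFY2 hvL2
    have hJK : ∫ ω, ⟪ω.2, φA ω.1.1⟫ ∂F = ∫ ω, ‖φA ω.1.1‖ ^ 2 ∂F := by
      have hK0 : (0:ℝ) ≤ ∫ ω, ‖φA ω.1.1‖ ^ 2 ∂F := integral_nonneg fun ω => sq_nonneg _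
      have hall : ∀ t : ℝ, 0 ≤ t ^ 2 * (∫ ω, ‖φA ω.1.1‖ ^ 2 ∂F)
          - 2 * t * ((∫ ω, ⟪ω.2, φA ω.1.1⟫ ∂F) - ∫ ω, ‖φA ω.1.1‖ ^ 2 ∂F) := by
        intro t
        have hmem : φA + t • φA ∈ A := A.add_mem hφA (A.smul_mem t hφA)
        have hq := hFmin _ hmem
        have hg2 : MemLp (fun ω : ΩSp M₁ M₂ N => (φA + t • φA) ω.1.1) 2 F := by
          exact hvL2.add (hvL2.const_smul t)
        have hRB : MSE F (fun x => (φA + t • φA) x.1)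
            = (∫ ω, ‖ω.2‖ ^ 2 ∂F) - 2 * (∫ ω, ⟪ω.2, (φA + t • φA) ω.1.1⟫ ∂F)
              + ∫ ω, ‖(φA + t • φA) ω.1.1‖ ^ 2 ∂F := integral_norm_sub_sq hFY2 hg2
        have e1 : ∫ ω, ⟪ω.2, (φA + t • φA) ω.1.1⟫ ∂F
            = (1 + t) * ∫ ω, ⟪ω.2, φA ω.1.1⟫ ∂F := by
          have e : ∀ ω : ΩSp M₁ M₂ N,
              ⟪ω.2, (φA + t • φA) ω.1.1⟫ = (1 + t) * ⟪ω.2, φA ω.1.1⟫ := by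
            intro ω
            have h' : (φA + t • φA) ω.1.1 = (1 + t) • φA ω.1.1 := by
              simp [add_smul]
            rw [h', real_inner_smul_right]
          rw [integral_congr_ae (ae_of_all _ e), integral_const_mul]
        have e2 : ∫ ω, ‖(φA + t • φA) ω.1.1‖ ^ 2 ∂F
            = (1 + t) ^ 2 * ∫ ω, ‖φA ω.1.1‖ ^ 2 ∂F := by
          have e : ∀ ω : ΩSp M₁ M₂ N,
              ‖(φA + t • φA) ω.1.1‖ ^ 2 = (1 + t) ^ 2 * ‖φA ω.1.1‖ ^ 2 := by
            intro ω
            have h' : (φA + t • φA) ω.1.1 = (1 + t) • φA ω.1.1 := by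
              simp [add_smul]
            rw [h', norm_smul, Real.norm_eq_abs, mul_pow, sq_abs]
          rw [integral_congr_ae (ae_of_all _ e), integral_const_mul]
        rw [hMSEφA, hexp0, hRB, e1, e2] at hq
        nlinarith [hq]
      have := quad_zero hK0 hall
      linarith
    -- the reflected measure
    set T : ΩSp M₁ M₂ N → ΩSp M₁ M₂ N :=
      fun ω => (ω.1, (2:ℝ) • φA ω.1.1 - ω.2) with hTdef
    have hTm : Measurable T := by
      exact measurable_fst.prodMk (((hφAm.comp hπm).const_smul (2:ℝ)).sub measurable_snd)
    set F' := F.map T with hF'eq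
    have hF'p : IsProbabilityMeasure F' := by
      rw [hF'eq]; exact Measure.isProbabilityMeasure_map hTm.aemeasurable
    haveI := hF'p
    have hF'map : F'.map Prod.fst = ν := by
      rw [hF'eq, Measure.map_map measurable_fst hTm]
      have : (Prod.fst ∘ T) = (Prod.fst : ΩSp M₁ M₂ N → XSp M₁ M₂) := rfl
      rw [this, hFmap]
    have hY'L2 : MemLp (fun ω : ΩSp M₁ M₂ N => ω.2) 2 F' := by
      rw [hF'eq]
      refine (memLp_map_measure_iff measurable_snd.aestronglyMeasurable
        hTm.aemeasurable).mpr ?_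
      exact (hvL2.const_smul (2:ℝ)).sub hFY2
    have hY'int : Integrable (fun ω : ΩSp M₁ M₂ N => ω.2) F' := hY'L2.integrable one_le_two
    -- second moment of F'
    have hF'c : ∫ ω, ‖ω.2‖ ^ 2 ∂F' = c := by
      have hASM : AEStronglyMeasurable (fun ω : ΩSp M₁ M₂ N => ‖ω.2‖ ^ 2) F' :=
        (measurable_snd.norm.pow_const 2).aestronglyMeasurable
      have e0 : ∫ ω, ‖ω.2‖ ^ 2 ∂F' = ∫ ω, ‖(2:ℝ) • φA ω.1.1 - ω.2‖ ^ 2 ∂F := by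
        rw [hF'eq]; exact integral_map hTm.aemeasurable hASM
      have h2v : MemLp (fun ω : ΩSp M₁ M₂ N => (2:ℝ) • φA ω.1.1) 2 F := by
        exact hvL2.const_smul (2:ℝ)
      have e1 : ∫ ω, ‖(2:ℝ) • φA ω.1.1 - ω.2‖ ^ 2 ∂F
          = (∫ ω, ‖(2:ℝ) • φA ω.1.1‖ ^ 2 ∂F)
            - 2 * (∫ ω, ⟪(2:ℝ) • φA ω.1.1, ω.2⟫ ∂F) + ∫ ω, ‖ω.2‖ ^ 2 ∂F :=
        integral_norm_sub_sq h2v hFY2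
      have e2 : ∫ ω, ‖(2:ℝ) • φA ω.1.1‖ ^ 2 ∂F = 4 * ∫ ω, ‖φA ω.1.1‖ ^ 2 ∂F := by
        have e : ∀ ω : ΩSp M₁ M₂ N, ‖(2:ℝ) • φA ω.1.1‖ ^ 2 = 4 * ‖φA ω.1.1‖ ^ 2 := by
          intro ω
          rw [norm_smul, Real.norm_eq_abs, mul_pow, sq_abs]
          norm_num
        rw [integral_congr_ae (ae_of_all _ e), integral_const_mul]
      have e3 : ∫ ω, ⟪(2:ℝ) • φA ω.1.1, ω.2⟫ ∂F = 2 * ∫ ω, ⟪ω.2, φA ω.1.1⟫ ∂F := by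
        have e : ∀ ω : ΩSp M₁ M₂ N,
            ⟪(2:ℝ) • φA ω.1.1, ω.2⟫ = 2 * ⟪ω.2, φA ω.1.1⟫ := by
          intro ω
          rw [real_inner_smul_left, real_inner_comm]
        rw [integral_congr_ae (ae_of_all _ e), integral_const_mul]
      rw [e0, e1, e2, e3, hJK, hFc]
      ring
    -- minimization over A for F'
    have hF'min : ∀ φ ∈ A, MSE F' (fun x => φA x.1) ≤ MSE F' (fun x => φ x.1) := by
      intro φ hφ
      have hφm := hAmeas φ hφ
      have hASMφ : AEStronglyMeasurable (fun ω : ΩSp M₁ M₂ N => ‖ω.2 - φ ω.1.1‖ ^ 2) F' :=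
        ((measurable_snd.sub (hφm.comp hπm)).norm.pow_const 2).aestronglyMeasurable
      have hASMA : AEStronglyMeasurable (fun ω : ΩSp M₁ M₂ N => ‖ω.2 - φA ω.1.1‖ ^ 2) F' :=
        ((measurable_snd.sub (hφAm.comp hπm)).norm.pow_const 2).aestronglyMeasurable
      have eR : MSE F' (fun x => φ x.1) = MSE F (fun x => ((2:ℝ) • φA - φ) x.1) := by
        have s1 : MSE F' (fun x => φ x.1) = ∫ ω, ‖(T ω).2 - φ (T ω).1.1‖ ^ 2 ∂F := by
          rw [hF'eq]; exact integral_map hTm.aemeasurable hASMφ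
        have e : ∀ ω : ΩSp M₁ M₂ N,
            ‖(T ω).2 - φ (T ω).1.1‖ ^ 2 = ‖ω.2 - ((2:ℝ) • φA - φ) ω.1.1‖ ^ 2 := by
          intro ω
          have e' : (T ω).2 - φ (T ω).1.1 = -(ω.2 - ((2:ℝ) • φA - φ) ω.1.1) := by
            show (2:ℝ) • φA ω.1.1 - ω.2 - φ ω.1.1 = -(ω.2 - ((2:ℝ) • φA ω.1.1 - φ ω.1.1))
            abel
          rw [e', norm_neg]
        calc MSE F' (fun x => φ x.1) = ∫ ω, ‖(T ω).2 - φ (T ω).1.1‖ ^ 2 ∂F := s1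
          _ = ∫ ω, ‖ω.2 - ((2:ℝ) • φA - φ) ω.1.1‖ ^ 2 ∂F :=
              integral_congr_ae (ae_of_all _ e)
          _ = MSE F (fun x => ((2:ℝ) • φA - φ) x.1) := rfl
      have eL : MSE F' (fun x => φA x.1) = MSE F (fun x => φA x.1) := by
        have s1 : MSE F' (fun x => φA x.1) = ∫ ω, ‖(T ω).2 - φA (T ω).1.1‖ ^ 2 ∂F := by
          rw [hF'eq]; exact integral_map hTm.aemeasurable hASMA
        have e : ∀ ω : ΩSp M₁ M₂ N,
            ‖(T ω).2 - φA (T ω).1.1‖ ^ 2 = ‖ω.2 - φA ω.1.1‖ ^ 2 := by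
          intro ω
          have e' : (T ω).2 - φA (T ω).1.1 = -(ω.2 - φA ω.1.1) := by
            show (2:ℝ) • φA ω.1.1 - ω.2 - φA ω.1.1 = -(ω.2 - φA ω.1.1)
            rw [two_smul]; abel
          rw [e', norm_neg]
        calc MSE F' (fun x => φA x.1) = ∫ ω, ‖(T ω).2 - φA (T ω).1.1‖ ^ 2 ∂F := s1
          _ = ∫ ω, ‖ω.2 - φA ω.1.1‖ ^ 2 ∂F := integral_congr_ae (ae_of_all _ e)
          _ = MSE F (fun x => φA x.1) := hMSEφA.symm
      rw [eL, eR]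
      exact hFmin _ (A.sub_mem (A.smul_mem 2 hφA) hφ)
    have hF'mem : F' ∈ S := by
      refine ⟨hF'p, hF'map, hY'L2, hF'min, ?_, hF'c⟩
      rintro ψ hψ
      rw [(Submodule.mem_bot ℝ).mp hψ]
    -- conditional expectation transfer
    set g := condExp (sigmaX1 M₁ M₂ N) F (fun ω' : ΩSp M₁ M₂ N => ω'.2) with hgdef
    have hg_sm : StronglyMeasurable[sigmaX1 M₁ M₂ N] g := stronglyMeasurable_condExp
    have hgT : ∀ ω : ΩSp M₁ M₂ N, g (T ω) = g ω := fun ω =>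
      comap_rigid (f := fun ω : ΩSp M₁ M₂ N => ω.1.1) hg_sm.measurable rfl
    have hgm0 : Measurable g := (hg_sm.mono hm).measurable
    have hgint : Integrable g F := integrable_condExp
    haveI : IsFiniteMeasure (F.trim hm) := isFiniteMeasure_trim hm
    haveI : IsFiniteMeasure (F'.trim hm) := isFiniteMeasure_trim hm
    set h : ΩSp M₁ M₂ N → Euc N := fun ω => (2:ℝ) • φA ω.1.1 - g ω with hhdef
    have hh_smm : StronglyMeasurable[sigmaX1 M₁ M₂ N] h := by
      exact (((hφAm.comp hπm1).const_smul (2:ℝ)).stronglyMeasurable).sub hg_sm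
    have hh_m : Measurable h := (hh_smm.mono hm).measurable
    have hhint : Integrable h F := by
      exact (hvint.smul (2:ℝ)).sub hgint
    have hhintF' : Integrable h F' := by
      rw [hF'eq]
      refine (integrable_map_measure hh_m.aestronglyMeasurable hTm.aemeasurable).mpr ?_
      have e : (h ∘ T) = h := by
        funext ω
        show (2:ℝ) • φA (T ω).1.1 - g (T ω) = (2:ℝ) • φA ω.1.1 - g ω
        rw [hgT]
      rw [e]; exact hhint
    have hg_eq : ∀ s : Set (ΩSp M₁ M₂ N), MeasurableSet[sigmaX1 M₁ M₂ N] s → F' s < ⊤ →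
        ∫ ω in s, h ω ∂F' = ∫ ω in s, (fun ω : ΩSp M₁ M₂ N => ω.2) ω ∂F' := by
      intro s hs _hfin
      obtain ⟨t, ht, rfl⟩ := hs
      have hsE : MeasurableSet ((fun ω : ΩSp M₁ M₂ N => ω.1.1) ⁻¹' t) := hπm ht
      have hpre : T ⁻¹' ((fun ω : ΩSp M₁ M₂ N => ω.1.1) ⁻¹' t)
          = (fun ω : ΩSp M₁ M₂ N => ω.1.1) ⁻¹' t := rfl
      rw [hF'eq, setIntegral_map hsE hh_m.aestronglyMeasurable hTm.aemeasurable,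
        setIntegral_map hsE measurable_snd.aestronglyMeasurable hTm.aemeasurable, hpre]
      have e1 : ∀ ω : ΩSp M₁ M₂ N, h (T ω) = (2:ℝ) • φA ω.1.1 - g ω := by
        intro ω
        show (2:ℝ) • φA (T ω).1.1 - g (T ω) = _
        rw [hgT]
      have e2 : ∀ ω : ΩSp M₁ M₂ N, ((T ω).2 : Euc N) = (2:ℝ) • φA ω.1.1 - ω.2 :=
        fun ω => rfl
      simp only [e1, e2]
      have i1 : IntegrableOn (fun ω : ΩSp M₁ M₂ N => (2:ℝ) • φA ω.1.1)
          ((fun ω : ΩSp M₁ M₂ N => ω.1.1) ⁻¹' t) F := (hvint.smul (2:ℝ)).integrableOn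
      have i2 : IntegrableOn g ((fun ω : ΩSp M₁ M₂ N => ω.1.1) ⁻¹' t) F :=
        hgint.integrableOn
      have i3 : IntegrableOn (fun ω : ΩSp M₁ M₂ N => ω.2)
          ((fun ω : ΩSp M₁ M₂ N => ω.1.1) ⁻¹' t) F := hYint.integrableOn
      have hs1 : MeasurableSet[sigmaX1 M₁ M₂ N] ((fun ω : ΩSp M₁ M₂ N => ω.1.1) ⁻¹' t) :=
        ⟨t, ht, rfl⟩
      rw [integral_sub i1 i2, integral_sub i1 i3, hgdef,
        setIntegral_condExp hm hYint hs1]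
    have hcond : h =ᵐ[F'] condExp (sigmaX1 M₁ M₂ N) F' (fun ω' : ΩSp M₁ M₂ N => ω'.2) :=
      ae_eq_condExp_of_forall_setIntegral_eq hm hY'int
        (fun s _ _ => hhintF'.integrableOn) hg_eq (hh_smm.aestronglyMeasurable)
    have hCE : ∫ ω, ‖ω.2 - condExp (sigmaX1 M₁ M₂ N) F' (fun ω' : ΩSp M₁ M₂ N => ω'.2) ω‖ ^ 2 ∂F'
        = ∫ ω, ‖ω.2 - g ω‖ ^ 2 ∂F := by
      have e1 : ∫ ω, ‖ω.2 - condExp (sigmaX1 M₁ M₂ N) F' (fun ω' : ΩSp M₁ M₂ N => ω'.2) ω‖ ^ 2 ∂F'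
          = ∫ ω, ‖ω.2 - h ω‖ ^ 2 ∂F' := by
        refine integral_congr_ae (hcond.mono fun ω hω => ?_)
        show ‖ω.2 - condExp (sigmaX1 M₁ M₂ N) F' (fun ω' : ΩSp M₁ M₂ N => ω'.2) ω‖ ^ 2
            = ‖ω.2 - h ω‖ ^ 2
        rw [hω]
      have hASM2 : AEStronglyMeasurable (fun ω : ΩSp M₁ M₂ N => ‖ω.2 - h ω‖ ^ 2) F' :=
        ((measurable_snd.sub hh_m).norm.pow_const 2).aestronglyMeasurable
      have e2 : ∫ ω, ‖ω.2 - h ω‖ ^ 2 ∂F' = ∫ ω, ‖(T ω).2 - h (T ω)‖ ^ 2 ∂F := by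
        rw [hF'eq]; exact integral_map hTm.aemeasurable hASM2
      have e3 : ∀ ω : ΩSp M₁ M₂ N, ‖(T ω).2 - h (T ω)‖ ^ 2 = ‖ω.2 - g ω‖ ^ 2 := by
        intro ω
        have e : (T ω).2 - h (T ω) = -(ω.2 - g ω) := by
          show ((2:ℝ) • φA ω.1.1 - ω.2) - ((2:ℝ) • φA (T ω).1.1 - g (T ω)) = _
          rw [hgT]
          show ((2:ℝ) • φA ω.1.1 - ω.2) - ((2:ℝ) • φA ω.1.1 - g ω) = -(ω.2 - g ω)
          abel
        rw [e, norm_neg]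
      rw [e1, e2]
      exact integral_congr_ae (ae_of_all _ e3)
    -- parallelogram inequality
    have hASM3 : AEStronglyMeasurable (fun ω : ΩSp M₁ M₂ N => ‖ω.2 - ρ ω.1.1‖ ^ 2) F' :=
      ((measurable_snd.sub (hρm.comp hπm)).norm.pow_const 2).aestronglyMeasurable
    have hMSE1F' : ∫ ω, ‖ω.2 - ρ ω.1.1‖ ^ 2 ∂F'
        = ∫ ω, ‖(2:ℝ) • φA ω.1.1 - ω.2 - ρ ω.1.1‖ ^ 2 ∂F := by
      rw [hF'eq]; exact integral_map hTm.aemeasurable hASM3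
    have hq3 : MemLp (fun ω : ΩSp M₁ M₂ N => (2:ℝ) • φA ω.1.1 - ω.2 - ρ ω.1.1) 2 F := by
      exact ((hvL2.const_smul (2:ℝ)).sub hFY2).sub hρπ2
    have hpar : 2 * ∫ ω, ‖ω.2 - φA ω.1.1‖ ^ 2 ∂F
        ≤ (∫ ω, ‖ω.2 - ρ ω.1.1‖ ^ 2 ∂F)
          + ∫ ω, ‖(2:ℝ) • φA ω.1.1 - ω.2 - ρ ω.1.1‖ ^ 2 ∂F := by
      have i1 : Integrable (fun ω : ΩSp M₁ M₂ N => ‖ω.2 - φA ω.1.1‖ ^ 2) F :=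
        (hFY2.sub hvL2).norm.integrable_sq
      have i2 : Integrable (fun ω : ΩSp M₁ M₂ N => ‖ω.2 - ρ ω.1.1‖ ^ 2) F :=
        (hFY2.sub hρπ2).norm.integrable_sq
      have i3 : Integrable
          (fun ω : ΩSp M₁ M₂ N => ‖(2:ℝ) • φA ω.1.1 - ω.2 - ρ ω.1.1‖ ^ 2) F :=
        hq3.norm.integrable_sq
      have hmono : ∫ ω, (2 * ‖ω.2 - φA ω.1.1‖ ^ 2) ∂F
          ≤ ∫ ω, (‖ω.2 - ρ ω.1.1‖ ^ 2 + ‖(2:ℝ) • φA ω.1.1 - ω.2 - ρ ω.1.1‖ ^ 2) ∂F :=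
        integral_mono (i1.const_mul 2) (i2.add i3)
          (fun ω => para_ineq ω.2 (φA ω.1.1) (ρ ω.1.1))
      rwa [integral_const_mul, integral_add i2 i3] at hmono
    -- assemble
    have r1 : REG1 F φA = (∫ ω, ‖ω.2 - φA ω.1.1‖ ^ 2 ∂F) - ∫ ω, ‖ω.2 - g ω‖ ^ 2 ∂F := by
      rw [hgdef]; exact rfl
    have r2 : REG1 F ρ = (∫ ω, ‖ω.2 - ρ ω.1.1‖ ^ 2 ∂F) - ∫ ω, ‖ω.2 - g ω‖ ^ 2 ∂F := by
      rw [hgdef]; exact rfl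
    have r3 : REG1 F' ρ = (∫ ω, ‖(2:ℝ) • φA ω.1.1 - ω.2 - ρ ω.1.1‖ ^ 2 ∂F)
        - ∫ ω, ‖ω.2 - g ω‖ ^ 2 ∂F := by
      have : REG1 F' ρ = (∫ ω, ‖ω.2 - ρ ω.1.1‖ ^ 2 ∂F')
          - ∫ ω, ‖ω.2 - condExp (sigmaX1 M₁ M₂ N) F' (fun ω' : ΩSp M₁ M₂ N => ω'.2) ω‖ ^ 2 ∂F' := rfl
      rw [this, hCE, hMSE1F']
    have hfinal : REG1 F φA + REG1 F φA ≤ REG1 F ρ + REG1 F' ρ := by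
      rw [r1, r2, r3]
      linarith [hpar]
    rcases le_total (REG1 F ρ) (REG1 F' ρ) with hle | hle
    · exact le_trans (by linarith) (hsupmem F' hF'mem)
    · exact le_trans (by linarith) (hsupmem F hFS')
  -- conclude
  refine ciSup_le fun F => ?_
  by_cases hF : F ∈ S
  · rw [ciSup_pos hF]
    exact key F hF
  · haveI : IsEmpty (F ∈ S) := ⟨hF⟩
    rw [Real.iSup_of_isEmpty]
    have h0 : ¬ ((0 : Measure (ΩSp M₁ M₂ N)) ∈ S) := by
      intro h
      have h1 := h.1.measure_univ
      rw [show (0 : Measure (ΩSp M₁ M₂ N)) Set.univ = 0 from rfl] at h1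
      exact zero_ne_one h1
    haveI : IsEmpty ((0 : Measure (ΩSp M₁ M₂ N)) ∈ S) := ⟨h0⟩
    have h2 : (⨆ _ : (0 : Measure (ΩSp M₁ M₂ N)) ∈ S, REG1 0 ρ)
        ≤ ⨆ G' : Measure (ΩSp M₁ M₂ N), ⨆ _ : G' ∈ S, REG1 G' ρ :=
      le_ciSup hKbdd (0 : Measure (ΩSp M₁ M₂ N))
    rwa [Real.iSup_of_isEmpty] at h2
end
end

section
/- Shared-representation regression (Section 5.2): if A = {0} (no labeled examples from the first domain), then the single-domain minimax-regret estimator of Y from X₁ is ρ_S(X₁) = E_ν[ψ_B(X₂)|X₁], the conditional expectation under ν of ψ_B(X₂) given X₁; that is, ρ_S minimizes sup_{F∈𝓕} REG₁(F,ρ) over all square-integrable Borel functions ρ:ℝ^{M₁}→ℝ^N. -/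
open MeasureTheory

noncomputable section

namespace Stmt15Aux

local notation "⟪" x ", " y "⟫" => @inner ℝ _ _ x y

variable {α : Type*}

/-- a strongly measurable function w.r.t. a comap σ-algebra is constant on fibers -/
theorem fiber_const {β γ : Type*} [mβ : MeasurableSpace β] [TopologicalSpace γ] [T2Space γ]
    {X : α → β} {H : α → γ} (hH : StronglyMeasurable[mβ.comap X] H) {ω ω' : α}
    (h : X ω = X ω') : H ω = H ω' := by
  letI : MeasurableSpace α := mβ.comap X
  have key : ∀ n, hH.approx n ω = hH.approx n ω' := by
    intro n
    have ht : MeasurableSet[mβ.comap X] ((hH.approx n) ⁻¹' {hH.approx n ω}) :=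
      (hH.approx n).measurableSet_fiber _
    rw [MeasurableSpace.measurableSet_comap] at ht
    obtain ⟨A, -, hA⟩ := ht
    have hω : ω ∈ X ⁻¹' A := by rw [hA]; exact Set.mem_singleton _
    have hω' : ω' ∈ X ⁻¹' A := by simpa only [Set.mem_preimage, ← h] using hω
    rw [hA] at hω'
    exact (Set.eq_of_mem_singleton hω').symm
  have h1 := hH.tendsto_approx ω
  have h2 := hH.tendsto_approx ω'
  have he : (fun n => (hH.approx n) ω) = fun n => (hH.approx n) ω' := funext key
  rw [he] at h1
  exact tendsto_nhds_unique h1 h2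

variable {m m0 : MeasurableSpace α} {μ : Measure α}
variable {E : Type*} [NormedAddCommGroup E] [InnerProductSpace ℝ E] [CompleteSpace E]

set_option linter.unusedSectionVars false

theorem integrable_inner_of {u v : α → E} (hu : MemLp u 2 μ) (hv : MemLp v 2 μ) :
    Integrable (fun x => ⟪u x, v x⟫) μ := by
  refine (L2.integrable_inner (𝕜 := ℝ) (hu.toLp u) (hv.toLp v)).congr ?_
  filter_upwards [hu.coeFn_toLp, hv.coeFn_toLp] with x h1 h2
  rw [h1, h2]

theorem integral_inner_toLp {u v : α → E} (hu : MemLp u 2 μ) (hv : MemLp v 2 μ) :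
    ∫ x, ⟪u x, v x⟫ ∂μ = ⟪hu.toLp u, hv.toLp v⟫ := by
  rw [L2.inner_def]
  refine integral_congr_ae ?_
  filter_upwards [hu.coeFn_toLp, hv.coeFn_toLp] with x h1 h2
  rw [h1, h2]

theorem integrable_norm_sq {u : α → E} (hu : MemLp u 2 μ) :
    Integrable (fun x => ‖u x‖ ^ 2) μ := by
  refine (integrable_inner_of hu hu).congr ?_
  filter_upwards with x
  rw [real_inner_self_eq_norm_sq]

theorem integral_norm_sq {u : α → E} (hu : MemLp u 2 μ) :
    ∫ x, ‖u x‖ ^ 2 ∂μ = ‖hu.toLp u‖ ^ 2 := by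
  have h1 : ∫ x, ‖u x‖ ^ 2 ∂μ = ∫ x, ⟪u x, u x⟫ ∂μ := by
    refine integral_congr_ae ?_
    filter_upwards with x
    rw [real_inner_self_eq_norm_sq]
  rw [h1, integral_inner_toLp hu hu, real_inner_self_eq_norm_sq]


section Bridge

variable [IsFiniteMeasure μ]

theorem condexp_ae_eq_condexpL2 (hm : m ≤ m0) (f : α → E) (hf : MemLp f 2 μ) :
    μ[f|m] =ᵐ[μ] (condExpL2 E ℝ hm (hf.toLp f) : Lp E 2 μ) := by
  haveI : SigmaFinite (μ.trim hm) := inferInstance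
  refine (ae_eq_condExp_of_forall_setIntegral_eq hm (hf.integrable one_le_two)
    (fun s _ hμs => ?_) (fun s hs hμs => ?_) ?_).symm
  · exact integrableOn_condExpL2_of_measure_ne_top hm hμs.ne _
  · refine (integral_condExpL2_eq hm (hf.toLp f) hs hμs.ne).trans ?_
    exact setIntegral_congr_ae (hm s hs) (hf.coeFn_toLp.mono fun x hx _ => hx)
  · exact aestronglyMeasurable_condExpL2 hm _

theorem memLp_condexp2 (hm : m ≤ m0) {f : α → E} (hf : MemLp f 2 μ) : MemLp (μ[f|m]) 2 μ :=
  (Lp.memLp _).ae_eq (condexp_ae_eq_condexpL2 hm f hf).symm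

theorem integral_inner_sub_condexp_eq_zero (hm : m ≤ m0) {f : α → E} (hf : MemLp f 2 μ)
    {z : α → E} (hz : MemLp z 2 μ) (hzm : AEStronglyMeasurable[m] z μ) :
    ∫ x, ⟪f x - (μ[f|m]) x, z x⟫ ∂μ = 0 := by
  have hcm : MemLp (μ[f|m]) 2 μ := memLp_condexp2 hm hf
  have h1 : ∫ x, ⟪f x - (μ[f|m]) x, z x⟫ ∂μ
      = ∫ x, ⟪f x, z x⟫ ∂μ - ∫ x, ⟪(μ[f|m]) x, z x⟫ ∂μ := by
    rw [← integral_sub (integrable_inner_of hf hz) (integrable_inner_of hcm hz)]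
    refine integral_congr_ae (Filter.Eventually.of_forall fun x => ?_)
    simp [inner_sub_left]
  have h2 : ∫ x, ⟪(μ[f|m]) x, z x⟫ ∂μ
      = ∫ x, ⟪(condExpL2 E ℝ hm (hf.toLp f) : Lp E 2 μ) x, z x⟫ ∂μ := by
    refine integral_congr_ae ?_
    filter_upwards [condexp_ae_eq_condexpL2 hm f hf] with x hx
    rw [hx]
  have h3 : ∫ x, ⟪(condExpL2 E ℝ hm (hf.toLp f) : Lp E 2 μ) x, z x⟫ ∂μ
      = ⟪((condExpL2 E ℝ hm (hf.toLp f) : Lp E 2 μ)), hz.toLp z⟫ := by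
    rw [L2.inner_def]
    refine integral_congr_ae ?_
    filter_upwards [hz.coeFn_toLp] with x hx
    rw [hx]
  have h4 : ∫ x, ⟪f x, z x⟫ ∂μ = ⟪hf.toLp f, hz.toLp z⟫ := integral_inner_toLp hf hz
  have h5 : AEStronglyMeasurable[m] (⇑(hz.toLp z)) μ := hzm.congr hz.coeFn_toLp.symm
  have h6 := inner_condExpL2_eq_inner_fun (𝕜 := ℝ) (E := E) hm (hf.toLp f) (hz.toLp z) h5
  rw [h1, h2, h3, h4, h6]
  ring

/-- Pythagoras: the regret identity. -/
theorem pythagoras (hm : m ≤ m0) {f g : α → E} (hf : MemLp f 2 μ) (hg : MemLp g 2 μ)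
    (hgm : AEStronglyMeasurable[m] g μ) :
    ∫ x, ‖f x - g x‖ ^ 2 ∂μ
      = ∫ x, ‖f x - (μ[f|m]) x‖ ^ 2 ∂μ + ∫ x, ‖(μ[f|m]) x - g x‖ ^ 2 ∂μ := by
  have hcm : MemLp (μ[f|m]) 2 μ := memLp_condexp2 hm hf
  have hfm : MemLp (fun x => f x - (μ[f|m]) x) 2 μ := hf.sub hcm
  have hmg : MemLp (fun x => (μ[f|m]) x - g x) 2 μ := hcm.sub hg
  have hmgm : AEStronglyMeasurable[m] (fun x => (μ[f|m]) x - g x) μ :=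
    (stronglyMeasurable_condExp.aestronglyMeasurable (μ := μ)).sub hgm
  have hzero : ∫ x, ⟪f x - (μ[f|m]) x, (μ[f|m]) x - g x⟫ ∂μ = 0 :=
    integral_inner_sub_condexp_eq_zero hm hf hmg hmgm
  have hpt : ∀ x, ‖f x - g x‖ ^ 2
      = (‖f x - (μ[f|m]) x‖ ^ 2 + 2 * ⟪f x - (μ[f|m]) x, (μ[f|m]) x - g x⟫)
        + ‖(μ[f|m]) x - g x‖ ^ 2 := by
    intro x
    have := norm_add_sq_real (f x - (μ[f|m]) x) ((μ[f|m]) x - g x)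
    rw [sub_add_sub_cancel] at this
    linarith
  have hAB : Integrable (fun x => ‖f x - (μ[f|m]) x‖ ^ 2
      + 2 * ⟪f x - (μ[f|m]) x, (μ[f|m]) x - g x⟫) μ :=
    (integrable_norm_sq hfm).add ((integrable_inner_of hfm hmg).const_mul 2)
  calc ∫ x, ‖f x - g x‖ ^ 2 ∂μ
      = ∫ x, ((‖f x - (μ[f|m]) x‖ ^ 2 + 2 * ⟪f x - (μ[f|m]) x, (μ[f|m]) x - g x⟫)
          + ‖(μ[f|m]) x - g x‖ ^ 2) ∂μ := integral_congr_ae (.of_forall hpt)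
    _ = ∫ x, (‖f x - (μ[f|m]) x‖ ^ 2 + 2 * ⟪f x - (μ[f|m]) x, (μ[f|m]) x - g x⟫) ∂μ
          + ∫ x, ‖(μ[f|m]) x - g x‖ ^ 2 ∂μ := integral_add hAB (integrable_norm_sq hmg)
    _ = (∫ x, ‖f x - (μ[f|m]) x‖ ^ 2 ∂μ + ∫ x, 2 * ⟪f x - (μ[f|m]) x, (μ[f|m]) x - g x⟫ ∂μ)
          + ∫ x, ‖(μ[f|m]) x - g x‖ ^ 2 ∂μ := by
        rw [integral_add (integrable_norm_sq hfm)
          ((integrable_inner_of hfm hmg).const_mul 2)]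
    _ = ∫ x, ‖f x - (μ[f|m]) x‖ ^ 2 ∂μ + ∫ x, ‖(μ[f|m]) x - g x‖ ^ 2 ∂μ := by
        rw [integral_const_mul, hzero]; ring

end Bridge

/-- In a real inner product space, if `0` minimizes `t ↦ ‖u - t • v‖²`, then `⟪u, v⟫ = 0`. -/
theorem inner_eq_zero_of_min {F : Type*} [NormedAddCommGroup F] [InnerProductSpace ℝ F]
    (u v : F) (h : ∀ t : ℝ, ‖u‖ ^ 2 ≤ ‖u - t • v‖ ^ 2) : ⟪u, v⟫ = 0 := by
  have hDpos : (0:ℝ) < ‖v‖ ^ 2 + 1 := by positivity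
  have h' := h (⟪u, v⟫ / (‖v‖ ^ 2 + 1))
  rw [norm_sub_sq_real, inner_smul_right, norm_smul, mul_pow, Real.norm_eq_abs, sq_abs] at h'
  have key : (0:ℝ) ≤ -2 * (⟪u, v⟫ / (‖v‖ ^ 2 + 1) * ⟪u, v⟫)
      + (⟪u, v⟫ / (‖v‖ ^ 2 + 1)) ^ 2 * ‖v‖ ^ 2 := by linarith
  have expand : (-2 * (⟪u, v⟫ / (‖v‖ ^ 2 + 1) * ⟪u, v⟫)
        + (⟪u, v⟫ / (‖v‖ ^ 2 + 1)) ^ 2 * ‖v‖ ^ 2) * (‖v‖ ^ 2 + 1) ^ 2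
      = ⟪u, v⟫ ^ 2 * (‖v‖ ^ 2 - 2 * (‖v‖ ^ 2 + 1)) := by
    field_simp
    ring
  have key2 : (0:ℝ) ≤ ⟪u, v⟫ ^ 2 * (‖v‖ ^ 2 - 2 * (‖v‖ ^ 2 + 1)) := by
    rw [← expand]
    exact mul_nonneg key (sq_nonneg _)
  have hsq : ⟪u, v⟫ ^ 2 ≤ 0 := by nlinarith [sq_nonneg (⟪u, v⟫ : ℝ), sq_nonneg ‖v‖]
  exact pow_eq_zero_iff (n := 2) (by norm_num) |>.mp (le_antisymm hsq (sq_nonneg _))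

end Stmt15Aux

namespace Stmt15Aux

section Spec

variable {M₁ M₂ N : ℕ}

lemma hm1 : sigmaX1 M₁ M₂ N ≤ (inferInstance : MeasurableSpace (ΩSp M₁ M₂ N)) :=
  (measurable_fst.comp measurable_fst).comap_le

lemma hmx : sigmaX1' M₁ M₂ ≤ (inferInstance : MeasurableSpace (XSp M₁ M₂)) :=
  measurable_fst.comap_le

lemma measX1 : Measurable[sigmaX1 M₁ M₂ N] (fun ω : ΩSp M₁ M₂ N => ω.1.1) :=
  comap_measurable _

lemma aesm1 {ρ : Euc M₁ → Euc N} (hρ : Measurable ρ) (F : Measure (ΩSp M₁ M₂ N)) :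
    AEStronglyMeasurable[sigmaX1 M₁ M₂ N] (fun ω : ΩSp M₁ M₂ N => ρ ω.1.1) F :=
  ((hρ.comp measX1).stronglyMeasurable).aestronglyMeasurable

/-- the regret formula `REG1 F ρ = ‖E[Y|X₁] - ρ(X₁)‖²` -/
theorem REG1_eq (F : Measure (ΩSp M₁ M₂ N)) [IsProbabilityMeasure F]
    (hY : MemLp (fun ω : ΩSp M₁ M₂ N => ω.2) 2 F)
    {ρ : Euc M₁ → Euc N} (hρm : Measurable ρ)
    (hρ2 : MemLp (fun ω : ΩSp M₁ M₂ N => ρ ω.1.1) 2 F) :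
    REG1 F ρ
      = ∫ ω, ‖(condExp (sigmaX1 M₁ M₂ N) F (fun ω' => ω'.2)) ω - ρ ω.1.1‖ ^ 2 ∂F := by
  have hpy := pythagoras (μ := F) hm1 hY hρ2 (aesm1 hρm F)
  unfold REG1 MSE1
  linarith [hpy]

end Spec

end Stmt15Aux


set_option maxHeartbeats 1600000 in
/-- Section 5.2, shared-representation regression: if `A = {0}` then
the single-domain minimax-regret estimator of `Y` from `X₁` is
`ρ_S(X₁) = E_ν[ψ_B(X₂)|X₁]`: its worst-case single-domain regret over `𝓕` is no larger
than that of any square-integrable Borel estimator `ρ(X₁)`. -/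
theorem stmt_15
    (M₁ M₂ N : ℕ) (hM₁ : 0 < M₁) (hM₂ : 0 < M₂) (hN : 0 < N)
    (ν : Measure (XSp M₁ M₂)) (hνp : IsProbabilityMeasure ν)
    (hνmom : MemLp (id : XSp M₁ M₂ → XSp M₁ M₂) 2 ν)
    (B : Submodule ℝ (Euc M₂ → Euc N))
    (hBmeas : ∀ ψ ∈ B, Measurable ψ)
    (hBL2 : ∀ ψ ∈ B, MemLp ψ 2 (ν.map Prod.snd))
    (ψB : Euc M₂ → Euc N) (hψB : ψB ∈ B)
    (c : ℝ) (hc : 0 < c)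
    (hne : (SetF ν (⊥ : Submodule ℝ (Euc M₁ → Euc N)) B 0 ψB c).Nonempty)
    (ρS : Euc M₁ → Euc N) (hρSmeas : Measurable ρS)
    (hρS : (fun x : XSp M₁ M₂ => ρS x.1) =ᵐ[ν]
      condExp (sigmaX1' M₁ M₂) ν (fun x => ψB x.2)) :
    ∀ ρ : Euc M₁ → Euc N, Measurable ρ → MemLp ρ 2 (ν.map Prod.fst) →
      (⨆ F ∈ SetF ν (⊥ : Submodule ℝ (Euc M₁ → Euc N)) B 0 ψB c, REG1 F ρS) ≤
        ⨆ F ∈ SetF ν (⊥ : Submodule ℝ (Euc M₁ → Euc N)) B 0 ψB c, REG1 F ρ := by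
  intro ρ hρm hρν
  haveI := hνp
  have hψBs : Measurable ψB := hBmeas ψB hψB
  -- ν-level facts
  have hψBν : MemLp (fun x : XSp M₁ M₂ => ψB x.2) 2 ν :=
    (memLp_map_measure_iff hψBs.aestronglyMeasurable measurable_snd.aemeasurable).mp
      (hBL2 ψB hψB)
  have hψBνint : Integrable (fun x : XSp M₁ M₂ => ψB x.2) ν := hψBν.integrable one_le_two
  have hρSν : MemLp (fun x : XSp M₁ M₂ => ρS x.1) 2 ν :=
    (Stmt15Aux.memLp_condexp2 Stmt15Aux.hmx hψBν).ae_eq hρS.symm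
  have hρν' : MemLp (fun x : XSp M₁ M₂ => ρ x.1) 2 ν :=
    (memLp_map_measure_iff hρm.aestronglyMeasurable measurable_fst.aemeasurable).mp hρν
  set K : ℝ := 2 * c + 2 * ∫ x, ‖ρ x.1‖ ^ 2 ∂ν with hK
  -- generic transfer of MemLp along the first marginal
  have memF : ∀ (F : Measure (ΩSp M₁ M₂ N)), F.map Prod.fst = ν →
      ∀ (u : XSp M₁ M₂ → Euc N), Measurable u → MemLp u 2 ν →
        MemLp (fun ω : ΩSp M₁ M₂ N => u ω.1) 2 F := by
    intro F hmap u hum hu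
    have h1 : MemLp u 2 (F.map Prod.fst) := by rw [hmap]; exact hu
    have h2 : AEStronglyMeasurable u (F.map Prod.fst) := hum.aestronglyMeasurable
    exact (memLp_map_measure_iff h2 measurable_fst.aemeasurable).mp h1
  -- the uniform bound
  have hbound : ∀ F ∈ SetF ν (⊥ : Submodule ℝ (Euc M₁ → Euc N)) B 0 ψB c,
      0 ≤ REG1 F ρ ∧ REG1 F ρ ≤ K := by
    rintro F ⟨hFp, hFmap, hY2, -, -, hYc⟩
    haveI := hFp
    have hρF : MemLp (fun ω : ΩSp M₁ M₂ N => ρ ω.1.1) 2 F :=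
      memF F hFmap (fun x => ρ x.1) (hρm.comp measurable_fst) hρν'
    have hreg := Stmt15Aux.REG1_eq F hY2 hρm hρF
    constructor
    · rw [hreg]
      exact integral_nonneg fun ω => by positivity
    · have hD : 0 ≤ ∫ ω, ‖ω.2 - condExp (sigmaX1 M₁ M₂ N) F (fun ω' => ω'.2) ω‖ ^ 2 ∂F :=
        integral_nonneg fun ω => by positivity
      have hint1 : Integrable (fun ω : ΩSp M₁ M₂ N => ‖ω.2 - ρ ω.1.1‖ ^ 2) F :=
        Stmt15Aux.integrable_norm_sq (hY2.sub hρF)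
      have hi2 : Integrable (fun ω : ΩSp M₁ M₂ N => 2 * ‖ω.2‖ ^ 2) F :=
        (Stmt15Aux.integrable_norm_sq hY2).const_mul 2
      have hi3 : Integrable (fun ω : ΩSp M₁ M₂ N => 2 * ‖ρ ω.1.1‖ ^ 2) F :=
        (Stmt15Aux.integrable_norm_sq hρF).const_mul 2
      have hmono : MSE1 F ρ ≤ ∫ ω, (2 * ‖ω.2‖ ^ 2 + 2 * ‖ρ ω.1.1‖ ^ 2) ∂F := by
        unfold MSE1
        refine integral_mono hint1 (hi2.add hi3) fun ω => ?_
        have h := norm_sub_le ω.2 (ρ ω.1.1)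
        have h2 := mul_le_mul h h (norm_nonneg _) (add_nonneg (norm_nonneg _) (norm_nonneg _))
        nlinarith [sq_nonneg (‖ω.2‖ - ‖ρ ω.1.1‖)]
      have hpush : ∫ ω, ‖ρ ω.1.1‖ ^ 2 ∂F = ∫ x, ‖ρ x.1‖ ^ 2 ∂ν := by
        rw [← hFmap]
        exact (integral_map measurable_fst.aemeasurable
          (((hρm.comp measurable_fst).norm.pow_const 2).aestronglyMeasurable)).symm
      have hsplit : ∫ ω, (2 * ‖ω.2‖ ^ 2 + 2 * ‖ρ ω.1.1‖ ^ 2) ∂F = K := by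
        rw [integral_add hi2 hi3, integral_const_mul, integral_const_mul, hYc, hpush, hK]
      unfold REG1
      linarith
  -- the key reflection step
  have key : ∀ F ∈ SetF ν (⊥ : Submodule ℝ (Euc M₁ → Euc N)) B 0 ψB c,
      ∃ F' ∈ SetF ν (⊥ : Submodule ℝ (Euc M₁ → Euc N)) B 0 ψB c,
        REG1 F ρS ≤ max (REG1 F ρ) (REG1 F' ρ) := by
    rintro F ⟨hFp, hFmap, hY2, -, hψcond, hYc⟩
    haveI := hFp
    have hρF : MemLp (fun ω : ΩSp M₁ M₂ N => ρ ω.1.1) 2 F :=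
      memF F hFmap (fun x => ρ x.1) (hρm.comp measurable_fst) hρν'
    have hρSF : MemLp (fun ω : ΩSp M₁ M₂ N => ρS ω.1.1) 2 F :=
      memF F hFmap (fun x => ρS x.1) (hρSmeas.comp measurable_fst) hρSν
    have hvF : MemLp (fun ω : ΩSp M₁ M₂ N => ψB ω.1.2) 2 F :=
      memF F hFmap (fun x => ψB x.2) (hψBs.comp measurable_snd) hψBν
    have hmF2 : MemLp (condExp (sigmaX1 M₁ M₂ N) F (fun ω' => ω'.2)) 2 F :=
      Stmt15Aux.memLp_condexp2 Stmt15Aux.hm1 hY2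
    -- first-order condition of B-optimality
    have hu2 : MemLp (fun ω : ΩSp M₁ M₂ N => ω.2 - ψB ω.1.2) 2 F := hY2.sub hvF
    have horthoL : (inner ℝ (hu2.toLp _) (hvF.toLp _) : ℝ) = 0 := by
      apply Stmt15Aux.inner_eq_zero_of_min
      intro t
      have ht2 : MemLp (fun ω : ΩSp M₁ M₂ N => (ω.2 - ψB ω.1.2) - t • ψB ω.1.2) 2 F :=
        hu2.sub (hvF.const_smul t)
      have e1 : ∫ ω, ‖ω.2 - ψB ω.1.2‖ ^ 2 ∂F = ‖hu2.toLp _‖ ^ 2 :=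
        Stmt15Aux.integral_norm_sq hu2
      have e2 : ∫ ω, ‖(ω.2 - ψB ω.1.2) - t • ψB ω.1.2‖ ^ 2 ∂F = ‖ht2.toLp _‖ ^ 2 :=
        Stmt15Aux.integral_norm_sq ht2
      have e3 : ht2.toLp _ = hu2.toLp _ - t • hvF.toLp _ := by
        rw [← MemLp.toLp_const_smul t hvF, ← MemLp.toLp_sub hu2 (hvF.const_smul t)]
        exact MemLp.toLp_congr _ _ (Filter.EventuallyEq.of_eq rfl)
      have hle := hψcond ((1 + t) • ψB) (B.smul_mem _ hψB)
      have hL : MSE F (fun x => ψB x.2) = ∫ ω, ‖ω.2 - ψB ω.1.2‖ ^ 2 ∂F := rfl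
      have hR : MSE F (fun x => ((1 + t) • ψB) x.2)
          = ∫ ω, ‖(ω.2 - ψB ω.1.2) - t • ψB ω.1.2‖ ^ 2 ∂F := by
        unfold MSE
        refine integral_congr_ae (Filter.Eventually.of_forall fun ω => ?_)
        show ‖ω.2 - ((1 + t) • ψB) ω.1.2‖ ^ 2 = _
        have harr : ω.2 - ((1 + t) • ψB) ω.1.2 = (ω.2 - ψB ω.1.2) - t • ψB ω.1.2 := by
          simp only [Pi.smul_apply, add_smul, one_smul]
          abel
        rw [harr]
      rw [hL, hR, e1, e2, e3] at hle
      exact hle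
    have hortho : ∫ ω, (inner ℝ (ω.2 - ψB ω.1.2) (ψB ω.1.2) : ℝ) ∂F = 0 := by
      rw [Stmt15Aux.integral_inner_toLp hu2 hvF]
      exact horthoL
    have hinnerY : ∫ ω, (inner ℝ ω.2 (ψB ω.1.2) : ℝ) ∂F = ∫ ω, ‖ψB ω.1.2‖ ^ 2 ∂F := by
      have h0 : ∫ ω, ((inner ℝ ω.2 (ψB ω.1.2) : ℝ) - ‖ψB ω.1.2‖ ^ 2) ∂F = 0 := by
        rw [← hortho]
        refine integral_congr_ae (Filter.Eventually.of_forall fun ω => ?_)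
        show (inner ℝ ω.2 (ψB ω.1.2) : ℝ) - ‖ψB ω.1.2‖ ^ 2
          = (inner ℝ (ω.2 - ψB ω.1.2) (ψB ω.1.2) : ℝ)
        rw [inner_sub_left, real_inner_self_eq_norm_sq]
      rw [integral_sub (Stmt15Aux.integrable_inner_of hY2 hvF)
        (Stmt15Aux.integrable_norm_sq hvF)] at h0
      linarith
    -- the reflection
    set T : ΩSp M₁ M₂ N → ΩSp M₁ M₂ N := fun ω => (ω.1, (2:ℝ) • ψB ω.1.2 - ω.2) with hTdef
    have hT : Measurable T := measurable_fst.prodMk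
      (((hψBs.comp (measurable_snd.comp measurable_fst)).const_smul (2:ℝ)).sub measurable_snd)
    set F' : Measure (ΩSp M₁ M₂ N) := F.map T with hF'def
    haveI hF'p : IsProbabilityMeasure F' := Measure.isProbabilityMeasure_map hT.aemeasurable
    have hF'map : F'.map Prod.fst = ν := by
      rw [hF'def, Measure.map_map measurable_fst hT]
      have : Prod.fst ∘ T = (Prod.fst : ΩSp M₁ M₂ N → XSp M₁ M₂) := rfl
      rw [this]
      exact hFmap
    have hYT : MemLp (fun ω : ΩSp M₁ M₂ N => (2:ℝ) • ψB ω.1.2 - ω.2) 2 F :=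
      (hvF.const_smul (2:ℝ)).sub hY2
    have hY2' : MemLp (fun ω : ΩSp M₁ M₂ N => ω.2) 2 F' := by
      rw [hF'def]
      exact (memLp_map_measure_iff measurable_snd.aestronglyMeasurable hT.aemeasurable).mpr hYT
    have hMSEmap : ∀ ψ : Euc M₂ → Euc N, Measurable ψ →
        MSE F' (fun x => ψ x.2) = MSE F (fun x => (2:ℝ) • ψB x.2 - ψ x.2) := by
      intro ψ hψmeas
      have hm' : AEStronglyMeasurable
          (fun ω : ΩSp M₁ M₂ N => ‖ω.2 - ψ ω.1.2‖ ^ 2) (F.map T) :=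
        ((measurable_snd.sub (hψmeas.comp (measurable_snd.comp measurable_fst))).norm.pow_const
          2).aestronglyMeasurable
      unfold MSE
      rw [hF'def]
      rw [integral_map hT.aemeasurable hm']
      refine integral_congr_ae (Filter.Eventually.of_forall fun ω => ?_)
      show ‖((2:ℝ) • ψB ω.1.2 - ω.2) - ψ ω.1.2‖ ^ 2
        = ‖ω.2 - ((2:ℝ) • ψB ω.1.2 - ψ ω.1.2)‖ ^ 2
      rw [show ((2:ℝ) • ψB ω.1.2 - ω.2) - ψ ω.1.2
          = -(ω.2 - ((2:ℝ) • ψB ω.1.2 - ψ ω.1.2)) from by abel, norm_neg]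
    have hF'mem : F' ∈ SetF ν (⊥ : Submodule ℝ (Euc M₁ → Euc N)) B 0 ψB c := by
      refine ⟨hF'p, hF'map, hY2', ?_, ?_, ?_⟩
      · intro φ hφ
        rw [Submodule.mem_bot] at hφ
        subst hφ
        exact le_refl _
      · intro ψ hψmem
        have h1 := hMSEmap ψB hψBs
        have h2 := hMSEmap ψ (hBmeas ψ hψmem)
        have h3 : MSE F (fun x => (2:ℝ) • ψB x.2 - ψB x.2) = MSE F (fun x => ψB x.2) := by
          unfold MSE
          refine integral_congr_ae (Filter.Eventually.of_forall fun ω => ?_)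
          show ‖ω.2 - ((2:ℝ) • ψB ω.1.2 - ψB ω.1.2)‖ ^ 2 = ‖ω.2 - ψB ω.1.2‖ ^ 2
          rw [show (2:ℝ) • ψB ω.1.2 - ψB ω.1.2 = ψB ω.1.2 from by rw [two_smul]; abel]
        have h4 := hψcond ((2:ℝ) • ψB - ψ) (B.sub_mem (B.smul_mem 2 hψB) hψmem)
        have h5 : MSE F (fun x => ((2:ℝ) • ψB - ψ) x.2)
            = MSE F (fun x => (2:ℝ) • ψB x.2 - ψ x.2) := rfl
        rw [h1, h3, h2]
        rw [h5] at h4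
        exact h4
      · have hpush : ∫ ω, ‖ω.2‖ ^ 2 ∂F' = ∫ ω, ‖(2:ℝ) • ψB ω.1.2 - ω.2‖ ^ 2 ∂F := by
          rw [hF'def]
          exact integral_map hT.aemeasurable (measurable_snd.norm.pow_const 2).aestronglyMeasurable
        rw [hpush]
        have hexp : ∀ ω : ΩSp M₁ M₂ N, ‖(2:ℝ) • ψB ω.1.2 - ω.2‖ ^ 2
            = 4 * ‖ψB ω.1.2‖ ^ 2 - 4 * (inner ℝ ω.2 (ψB ω.1.2) : ℝ) + ‖ω.2‖ ^ 2 := by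
          intro ω
          have h := norm_sub_sq_real ((2:ℝ) • ψB ω.1.2) ω.2
          have h2n : ‖(2:ℝ)‖ = 2 := by norm_num
          rw [norm_smul, h2n, real_inner_smul_left, real_inner_comm] at h
          rw [h]
          ring
        have hi1 : Integrable (fun ω : ΩSp M₁ M₂ N => 4 * ‖ψB ω.1.2‖ ^ 2) F :=
          (Stmt15Aux.integrable_norm_sq hvF).const_mul 4
        have hi2 : Integrable (fun ω : ΩSp M₁ M₂ N => 4 * (inner ℝ ω.2 (ψB ω.1.2) : ℝ)) F :=
          (Stmt15Aux.integrable_inner_of hY2 hvF).const_mul 4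
        have hi3 : Integrable (fun ω : ΩSp M₁ M₂ N => ‖ω.2‖ ^ 2) F :=
          Stmt15Aux.integrable_norm_sq hY2
        calc ∫ ω, ‖(2:ℝ) • ψB ω.1.2 - ω.2‖ ^ 2 ∂F
            = ∫ ω, (4 * ‖ψB ω.1.2‖ ^ 2 - 4 * (inner ℝ ω.2 (ψB ω.1.2) : ℝ) + ‖ω.2‖ ^ 2) ∂F :=
              integral_congr_ae (Filter.Eventually.of_forall hexp)
          _ = (∫ ω, (4 * ‖ψB ω.1.2‖ ^ 2 - 4 * (inner ℝ ω.2 (ψB ω.1.2) : ℝ)) ∂F)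
              + ∫ ω, ‖ω.2‖ ^ 2 ∂F := integral_add (hi1.sub hi2) hi3
          _ = (∫ ω, 4 * ‖ψB ω.1.2‖ ^ 2 ∂F) - (∫ ω, 4 * (inner ℝ ω.2 (ψB ω.1.2) : ℝ) ∂F)
              + ∫ ω, ‖ω.2‖ ^ 2 ∂F := by rw [integral_sub hi1 hi2]
          _ = c := by
              rw [integral_const_mul, integral_const_mul, hinnerY, hYc]
              ring
    -- identification of the conditional expectation under F'
    have hρSsm1 : StronglyMeasurable[sigmaX1 M₁ M₂ N] (fun ω : ΩSp M₁ M₂ N => ρS ω.1.1) :=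
      (hρSmeas.comp Stmt15Aux.measX1).stronglyMeasurable
    have hGsm : StronglyMeasurable[sigmaX1 M₁ M₂ N]
        (fun ω : ΩSp M₁ M₂ N =>
          (2:ℝ) • ρS ω.1.1 - condExp (sigmaX1 M₁ M₂ N) F (fun ω' => ω'.2) ω) :=
      (hρSsm1.const_smul (2:ℝ)).sub stronglyMeasurable_condExp
    have hmFT : ∀ ω, condExp (sigmaX1 M₁ M₂ N) F (fun ω' => ω'.2) (T ω)
        = condExp (sigmaX1 M₁ M₂ N) F (fun ω' => ω'.2) ω :=
      fun ω => Stmt15Aux.fiber_const (stronglyMeasurable_condExp) rfl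
    have hGT : ∀ ω, (fun ω : ΩSp M₁ M₂ N =>
          (2:ℝ) • ρS ω.1.1 - condExp (sigmaX1 M₁ M₂ N) F (fun ω' => ω'.2) ω) (T ω)
        = (fun ω : ΩSp M₁ M₂ N =>
          (2:ℝ) • ρS ω.1.1 - condExp (sigmaX1 M₁ M₂ N) F (fun ω' => ω'.2) ω) ω := by
      intro ω
      simp only
      rw [hmFT ω]
    have hG2 : MemLp (fun ω : ΩSp M₁ M₂ N =>
        (2:ℝ) • ρS ω.1.1 - condExp (sigmaX1 M₁ M₂ N) F (fun ω' => ω'.2) ω) 2 F :=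
      (hρSF.const_smul (2:ℝ)).sub hmF2
    have hGasm : AEStronglyMeasurable (fun ω : ΩSp M₁ M₂ N =>
        (2:ℝ) • ρS ω.1.1 - condExp (sigmaX1 M₁ M₂ N) F (fun ω' => ω'.2) ω) (F.map T) :=
      ((hGsm.mono Stmt15Aux.hm1).aestronglyMeasurable)
    have hGint' : Integrable (fun ω : ΩSp M₁ M₂ N =>
        (2:ℝ) • ρS ω.1.1 - condExp (sigmaX1 M₁ M₂ N) F (fun ω' => ω'.2) ω) F' := by
      rw [hF'def]
      refine (integrable_map_measure hGasm hT.aemeasurable).mpr ?_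
      have hcomp : ((fun ω : ΩSp M₁ M₂ N =>
          (2:ℝ) • ρS ω.1.1 - condExp (sigmaX1 M₁ M₂ N) F (fun ω' => ω'.2) ω) ∘ T)
          = fun ω : ΩSp M₁ M₂ N =>
          (2:ℝ) • ρS ω.1.1 - condExp (sigmaX1 M₁ M₂ N) F (fun ω' => ω'.2) ω :=
        funext fun ω => hGT ω
      rw [hcomp]
      exact hG2.integrable one_le_two
    have hGcond : condExp (sigmaX1 M₁ M₂ N) F' (fun ω' => ω'.2) =ᵐ[F']
        (fun ω : ΩSp M₁ M₂ N =>
          (2:ℝ) • ρS ω.1.1 - condExp (sigmaX1 M₁ M₂ N) F (fun ω' => ω'.2) ω) := by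
      refine (ae_eq_condExp_of_forall_setIntegral_eq Stmt15Aux.hm1
        (hY2'.integrable one_le_two) (fun s _ _ => hGint'.integrableOn)
        (fun s hs _ => ?_) hGsm.aestronglyMeasurable).symm
      obtain ⟨A, hA, rfl⟩ := MeasurableSpace.measurableSet_comap.mp hs
      have hsΩ : MeasurableSet ((fun ω : ΩSp M₁ M₂ N => ω.1.1) ⁻¹' A) :=
        (measurable_fst.comp measurable_fst) hA
      have hsX : MeasurableSet ((Prod.fst : XSp M₁ M₂ → Euc M₁) ⁻¹' A) := measurable_fst hA
      have e1 : ∫ ω in (fun ω : ΩSp M₁ M₂ N => ω.1.1) ⁻¹' A,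
          ((2:ℝ) • ρS ω.1.1 - condExp (sigmaX1 M₁ M₂ N) F (fun ω' => ω'.2) ω) ∂F'
          = ∫ ω in (fun ω : ΩSp M₁ M₂ N => ω.1.1) ⁻¹' A,
          ((2:ℝ) • ρS ω.1.1 - condExp (sigmaX1 M₁ M₂ N) F (fun ω' => ω'.2) ω) ∂F := by
        rw [hF'def, setIntegral_map hsΩ hGasm hT.aemeasurable,
          show T ⁻¹' ((fun ω : ΩSp M₁ M₂ N => ω.1.1) ⁻¹' A)
            = (fun ω : ΩSp M₁ M₂ N => ω.1.1) ⁻¹' A from rfl]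
        exact setIntegral_congr_ae hsΩ (Filter.Eventually.of_forall fun ω _ => hGT ω)
      have e2 : ∫ ω in (fun ω : ΩSp M₁ M₂ N => ω.1.1) ⁻¹' A, ω.2 ∂F'
          = ∫ ω in (fun ω : ΩSp M₁ M₂ N => ω.1.1) ⁻¹' A, ((2:ℝ) • ψB ω.1.2 - ω.2) ∂F := by
        rw [hF'def, setIntegral_map hsΩ measurable_snd.aestronglyMeasurable hT.aemeasurable,
          show T ⁻¹' ((fun ω : ΩSp M₁ M₂ N => ω.1.1) ⁻¹' A)
            = (fun ω : ΩSp M₁ M₂ N => ω.1.1) ⁻¹' A from rfl]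
      have hkey : ∫ ω in (fun ω : ΩSp M₁ M₂ N => ω.1.1) ⁻¹' A, ψB ω.1.2 ∂F
          = ∫ ω in (fun ω : ΩSp M₁ M₂ N => ω.1.1) ⁻¹' A, ρS ω.1.1 ∂F := by
        have p1 : ∫ ω in (fun ω : ΩSp M₁ M₂ N => ω.1.1) ⁻¹' A, ψB ω.1.2 ∂F
            = ∫ x in (Prod.fst : XSp M₁ M₂ → Euc M₁) ⁻¹' A, ψB x.2 ∂ν := by
          rw [← hFmap]
          exact (setIntegral_map hsX ((hψBs.comp measurable_snd).aestronglyMeasurable)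
            measurable_fst.aemeasurable).symm
        have p2 : ∫ ω in (fun ω : ΩSp M₁ M₂ N => ω.1.1) ⁻¹' A, ρS ω.1.1 ∂F
            = ∫ x in (Prod.fst : XSp M₁ M₂ → Euc M₁) ⁻¹' A, ρS x.1 ∂ν := by
          rw [← hFmap]
          exact (setIntegral_map hsX ((hρSmeas.comp measurable_fst).aestronglyMeasurable)
            measurable_fst.aemeasurable).symm
        have hu' : MeasurableSet[sigmaX1' M₁ M₂] ((Prod.fst : XSp M₁ M₂ → Euc M₁) ⁻¹' A) :=
          MeasurableSpace.measurableSet_comap.mpr ⟨A, hA, rfl⟩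
        have p3 : ∫ x in (Prod.fst : XSp M₁ M₂ → Euc M₁) ⁻¹' A, ρS x.1 ∂ν
            = ∫ x in (Prod.fst : XSp M₁ M₂ → Euc M₁) ⁻¹' A,
                condExp (sigmaX1' M₁ M₂) ν (fun x => ψB x.2) x ∂ν :=
          setIntegral_congr_ae hsX (hρS.mono fun x hx _ => hx)
        have p4 : ∫ x in (Prod.fst : XSp M₁ M₂ → Euc M₁) ⁻¹' A,
                condExp (sigmaX1' M₁ M₂) ν (fun x => ψB x.2) x ∂ν
            = ∫ x in (Prod.fst : XSp M₁ M₂ → Euc M₁) ⁻¹' A, ψB x.2 ∂ν :=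
          setIntegral_condExp Stmt15Aux.hmx hψBνint hu'
        rw [p1, p2, p3, p4]
      have iρS2 : Integrable (fun ω : ΩSp M₁ M₂ N => (2:ℝ) • ρS ω.1.1) F :=
        (hρSF.const_smul (2:ℝ)).integrable one_le_two
      have iv2 : Integrable (fun ω : ΩSp M₁ M₂ N => (2:ℝ) • ψB ω.1.2) F :=
        (hvF.const_smul (2:ℝ)).integrable one_le_two
      have iY : Integrable (fun ω : ΩSp M₁ M₂ N => ω.2) F := hY2.integrable one_le_two
      have q1 : ∫ ω in (fun ω : ΩSp M₁ M₂ N => ω.1.1) ⁻¹' A,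
          ((2:ℝ) • ρS ω.1.1 - condExp (sigmaX1 M₁ M₂ N) F (fun ω' => ω'.2) ω) ∂F
          = (2:ℝ) • (∫ ω in (fun ω : ΩSp M₁ M₂ N => ω.1.1) ⁻¹' A, ρS ω.1.1 ∂F)
            - ∫ ω in (fun ω : ΩSp M₁ M₂ N => ω.1.1) ⁻¹' A,
                condExp (sigmaX1 M₁ M₂ N) F (fun ω' => ω'.2) ω ∂F := by
        rw [integral_sub iρS2.integrableOn integrable_condExp.integrableOn, integral_smul]
      have q2 : ∫ ω in (fun ω : ΩSp M₁ M₂ N => ω.1.1) ⁻¹' A,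
          condExp (sigmaX1 M₁ M₂ N) F (fun ω' => ω'.2) ω ∂F
          = ∫ ω in (fun ω : ΩSp M₁ M₂ N => ω.1.1) ⁻¹' A, ω.2 ∂F :=
        setIntegral_condExp Stmt15Aux.hm1 iY
          (MeasurableSpace.measurableSet_comap.mpr ⟨A, hA, rfl⟩)
      have q3 : ∫ ω in (fun ω : ΩSp M₁ M₂ N => ω.1.1) ⁻¹' A, ((2:ℝ) • ψB ω.1.2 - ω.2) ∂F
          = (2:ℝ) • (∫ ω in (fun ω : ΩSp M₁ M₂ N => ω.1.1) ⁻¹' A, ψB ω.1.2 ∂F)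
            - ∫ ω in (fun ω : ΩSp M₁ M₂ N => ω.1.1) ⁻¹' A, ω.2 ∂F := by
        rw [integral_sub iv2.integrableOn iY.integrableOn, integral_smul]
      rw [e1, e2, q1, q2, q3, hkey]
    -- regret of ρ under F'
    have hρF' : MemLp (fun ω : ΩSp M₁ M₂ N => ρ ω.1.1) 2 F' :=
      memF F' hF'map (fun x => ρ x.1) (hρm.comp measurable_fst) hρν'
    have hreg' : REG1 F' ρ
        = ∫ ω, ‖condExp (sigmaX1 M₁ M₂ N) F' (fun ω' => ω'.2) ω - ρ ω.1.1‖ ^ 2 ∂F' :=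
      Stmt15Aux.REG1_eq F' hY2' hρm hρF'
    have hGmeas : Measurable (fun ω : ΩSp M₁ M₂ N =>
        (2:ℝ) • ρS ω.1.1 - condExp (sigmaX1 M₁ M₂ N) F (fun ω' => ω'.2) ω) :=
      (hGsm.mono Stmt15Aux.hm1).measurable
    have hC : REG1 F' ρ = ∫ ω, ‖((2:ℝ) • ρS ω.1.1
        - condExp (sigmaX1 M₁ M₂ N) F (fun ω' => ω'.2) ω) - ρ ω.1.1‖ ^ 2 ∂F := by
      rw [hreg']
      have c1 : ∫ ω, ‖condExp (sigmaX1 M₁ M₂ N) F' (fun ω' => ω'.2) ω - ρ ω.1.1‖ ^ 2 ∂F'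
          = ∫ ω, ‖((2:ℝ) • ρS ω.1.1
            - condExp (sigmaX1 M₁ M₂ N) F (fun ω' => ω'.2) ω) - ρ ω.1.1‖ ^ 2 ∂F' := by
        refine integral_congr_ae ?_
        filter_upwards [hGcond] with ω h
        rw [h]
      rw [c1, hF'def]
      have hmeasint : AEStronglyMeasurable (fun ω : ΩSp M₁ M₂ N =>
          ‖((2:ℝ) • ρS ω.1.1 - condExp (sigmaX1 M₁ M₂ N) F (fun ω' => ω'.2) ω)
            - ρ ω.1.1‖ ^ 2) (F.map T) :=
        ((hGmeas.sub (hρm.comp (measurable_fst.comp measurable_fst))).norm.pow_const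
          2).aestronglyMeasurable
      rw [integral_map hT.aemeasurable hmeasint]
      refine integral_congr_ae (Filter.Eventually.of_forall fun ω => ?_)
      show ‖((2:ℝ) • ρS (T ω).1.1
          - condExp (sigmaX1 M₁ M₂ N) F (fun ω' => ω'.2) (T ω)) - ρ (T ω).1.1‖ ^ 2 = _
      rw [hmFT ω]
    -- regrets of ρ, ρS under F
    have hregS : REG1 F ρS
        = ∫ ω, ‖condExp (sigmaX1 M₁ M₂ N) F (fun ω' => ω'.2) ω - ρS ω.1.1‖ ^ 2 ∂F :=
      Stmt15Aux.REG1_eq F hY2 hρSmeas hρSF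
    have hregρ : REG1 F ρ
        = ∫ ω, ‖condExp (sigmaX1 M₁ M₂ N) F (fun ω' => ω'.2) ω - ρ ω.1.1‖ ^ 2 ∂F :=
      Stmt15Aux.REG1_eq F hY2 hρm hρF
    refine ⟨F', hF'mem, ?_⟩
    have hpar : ∀ ω : ΩSp M₁ M₂ N,
        ‖condExp (sigmaX1 M₁ M₂ N) F (fun ω' => ω'.2) ω - ρ ω.1.1‖ ^ 2
          + ‖((2:ℝ) • ρS ω.1.1 - condExp (sigmaX1 M₁ M₂ N) F (fun ω' => ω'.2) ω)
              - ρ ω.1.1‖ ^ 2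
        = 2 * ‖condExp (sigmaX1 M₁ M₂ N) F (fun ω' => ω'.2) ω - ρS ω.1.1‖ ^ 2
          + 2 * ‖ρS ω.1.1 - ρ ω.1.1‖ ^ 2 := by
      intro ω
      have e1 : condExp (sigmaX1 M₁ M₂ N) F (fun ω' => ω'.2) ω - ρ ω.1.1
          = (condExp (sigmaX1 M₁ M₂ N) F (fun ω' => ω'.2) ω - ρS ω.1.1)
            + (ρS ω.1.1 - ρ ω.1.1) := by abel
      have e2 : ((2:ℝ) • ρS ω.1.1 - condExp (sigmaX1 M₁ M₂ N) F (fun ω' => ω'.2) ω)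
          - ρ ω.1.1
          = (ρS ω.1.1 - ρ ω.1.1)
            - (condExp (sigmaX1 M₁ M₂ N) F (fun ω' => ω'.2) ω - ρS ω.1.1) := by
        rw [two_smul]
        abel
      rw [e1, e2,
        norm_add_sq_real (condExp (sigmaX1 M₁ M₂ N) F (fun ω' => ω'.2) ω - ρS ω.1.1)
          (ρS ω.1.1 - ρ ω.1.1),
        norm_sub_sq_real (ρS ω.1.1 - ρ ω.1.1)
          (condExp (sigmaX1 M₁ M₂ N) F (fun ω' => ω'.2) ω - ρS ω.1.1),
        real_inner_comm (ρS ω.1.1 - ρ ω.1.1)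
          (condExp (sigmaX1 M₁ M₂ N) F (fun ω' => ω'.2) ω - ρS ω.1.1)]
      ring
    have iB : Integrable (fun ω : ΩSp M₁ M₂ N =>
        ‖condExp (sigmaX1 M₁ M₂ N) F (fun ω' => ω'.2) ω - ρ ω.1.1‖ ^ 2) F :=
      Stmt15Aux.integrable_norm_sq (hmF2.sub hρF)
    have iC : Integrable (fun ω : ΩSp M₁ M₂ N =>
        ‖((2:ℝ) • ρS ω.1.1 - condExp (sigmaX1 M₁ M₂ N) F (fun ω' => ω'.2) ω)
          - ρ ω.1.1‖ ^ 2) F :=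
      Stmt15Aux.integrable_norm_sq (hG2.sub hρF)
    have iA : Integrable (fun ω : ΩSp M₁ M₂ N =>
        2 * ‖condExp (sigmaX1 M₁ M₂ N) F (fun ω' => ω'.2) ω - ρS ω.1.1‖ ^ 2) F :=
      (Stmt15Aux.integrable_norm_sq (hmF2.sub hρSF)).const_mul 2
    have iD : Integrable (fun ω : ΩSp M₁ M₂ N => 2 * ‖ρS ω.1.1 - ρ ω.1.1‖ ^ 2) F :=
      (Stmt15Aux.integrable_norm_sq (hρSF.sub hρF)).const_mul 2
    have hsum : (∫ ω, ‖condExp (sigmaX1 M₁ M₂ N) F (fun ω' => ω'.2) ω - ρ ω.1.1‖ ^ 2 ∂F)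
        + ∫ ω, ‖((2:ℝ) • ρS ω.1.1 - condExp (sigmaX1 M₁ M₂ N) F (fun ω' => ω'.2) ω)
            - ρ ω.1.1‖ ^ 2 ∂F
        = (∫ ω, 2 * ‖condExp (sigmaX1 M₁ M₂ N) F (fun ω' => ω'.2) ω - ρS ω.1.1‖ ^ 2 ∂F)
          + ∫ ω, 2 * ‖ρS ω.1.1 - ρ ω.1.1‖ ^ 2 ∂F := by
      rw [← integral_add iB iC, ← integral_add iA iD]
      exact integral_congr_ae (Filter.Eventually.of_forall hpar)
    have hDnn : 0 ≤ ∫ ω, 2 * ‖ρS ω.1.1 - ρ ω.1.1‖ ^ 2 ∂F :=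
      integral_nonneg fun ω => by positivity
    rw [hregS, hregρ, hC]
    rw [integral_const_mul] at hsum
    rcases le_total
      (∫ ω, ‖condExp (sigmaX1 M₁ M₂ N) F (fun ω' => ω'.2) ω - ρ ω.1.1‖ ^ 2 ∂F)
      (∫ ω, ‖((2:ℝ) • ρS ω.1.1 - condExp (sigmaX1 M₁ M₂ N) F (fun ω' => ω'.2) ω)
          - ρ ω.1.1‖ ^ 2 ∂F) with hle | hle
    · exact le_max_of_le_right (by linarith)
    · exact le_max_of_le_left (by linarith)
  -- the supremum argument
  obtain ⟨F₀, hF₀⟩ := hne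
  have hKnn : 0 ≤ K := le_trans (hbound F₀ hF₀).1 (hbound F₀ hF₀).2
  have hBdd : BddAbove (Set.range fun F : Measure (ΩSp M₁ M₂ N) =>
      ⨆ _ : F ∈ SetF ν (⊥ : Submodule ℝ (Euc M₁ → Euc N)) B 0 ψB c, REG1 F ρ) := by
    refine ⟨K, ?_⟩
    rintro x ⟨F, rfl⟩
    show (⨆ _ : F ∈ SetF ν (⊥ : Submodule ℝ (Euc M₁ → Euc N)) B 0 ψB c, REG1 F ρ) ≤ K
    by_cases hF : F ∈ SetF ν (⊥ : Submodule ℝ (Euc M₁ → Euc N)) B 0 ψB c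
    · haveI : Nonempty (F ∈ SetF ν (⊥ : Submodule ℝ (Euc M₁ → Euc N)) B 0 ψB c) := ⟨hF⟩
      rw [ciSup_const]
      exact (hbound F hF).2
    · haveI : IsEmpty (F ∈ SetF ν (⊥ : Submodule ℝ (Euc M₁ → Euc N)) B 0 ψB c) := ⟨hF⟩
      rw [Real.iSup_of_isEmpty]
      exact hKnn
  have hRHSnn : 0 ≤ ⨆ F ∈ SetF ν (⊥ : Submodule ℝ (Euc M₁ → Euc N)) B 0 ψB c, REG1 F ρ := by
    have h0 : REG1 F₀ ρ
        ≤ ⨆ F ∈ SetF ν (⊥ : Submodule ℝ (Euc M₁ → Euc N)) B 0 ψB c, REG1 F ρ := by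
      have h := le_ciSup hBdd F₀
      haveI : Nonempty (F₀ ∈ SetF ν (⊥ : Submodule ℝ (Euc M₁ → Euc N)) B 0 ψB c) := ⟨hF₀⟩
      rwa [ciSup_const] at h
    exact le_trans (hbound F₀ hF₀).1 h0
  refine Real.iSup_le (fun F => ?_) hRHSnn
  by_cases hF : F ∈ SetF ν (⊥ : Submodule ℝ (Euc M₁ → Euc N)) B 0 ψB c
  · haveI : Nonempty (F ∈ SetF ν (⊥ : Submodule ℝ (Euc M₁ → Euc N)) B 0 ψB c) := ⟨hF⟩
    rw [ciSup_const]
    obtain ⟨F', hF', hineq⟩ := key F hF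
    have g1 : REG1 F ρ
        ≤ ⨆ G ∈ SetF ν (⊥ : Submodule ℝ (Euc M₁ → Euc N)) B 0 ψB c, REG1 G ρ := by
      have h := le_ciSup hBdd F
      rwa [ciSup_const] at h
    have g2 : REG1 F' ρ
        ≤ ⨆ G ∈ SetF ν (⊥ : Submodule ℝ (Euc M₁ → Euc N)) B 0 ψB c, REG1 G ρ := by
      haveI : Nonempty (F' ∈ SetF ν (⊥ : Submodule ℝ (Euc M₁ → Euc N)) B 0 ψB c) := ⟨hF'⟩
      have h := le_ciSup hBdd F'
      rwa [ciSup_const] at h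
    exact hineq.trans (max_le g1 g2)
  · haveI : IsEmpty (F ∈ SetF ν (⊥ : Submodule ℝ (Euc M₁ → Euc N)) B 0 ψB c) := ⟨hF⟩
    rw [Real.iSup_of_isEmpty]
    exact hRHSnn
end
end

section
/- Dual vanishing condition (Section 5.3): suppose that for every φ ∈ A, φ(X₁) = E_ν[η_φ(X₂)|X₁] ν-almost everywhere, where η_φ ∈ B is the B-optimal estimator of φ(X₁) from X₂. Then E_ν[ρ_{B,A}(X₂,X₁)|X₁] = 0, and hence the single-domain minimax-regret estimator ρ_S(X₁) = E_ν[ψ_B(X₂)|X₁] + E_ν[ρ_{B,A}(X₂,X₁)|X₁] reduces to the shared-representation estimator E_ν[ψ_B(X₂)|X₁]: the labeled training data from the first (observed) domain is not needed. -/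
open MeasureTheory

noncomputable section

/-- Section 5.3, dual vanishing condition: if
`φ(X₁) = E_ν[η_φ(X₂)|X₁]` `ν`-a.e. for every `φ ∈ A` (with `η_φ` the `B`-optimal estimator
of `φ(X₁)` from `X₂`), then `E_ν[ρ_(B,A)(X₂,X₁)|X₁] = 0`, and hence the single-domain
minimax-regret estimator `ρ_S(X₁) = E_ν[ψ_B(X₂)|X₁] + E_ν[ρ_(B,A)(X₂,X₁)|X₁]` reduces to
the shared-representation estimator `E_ν[ψ_B(X₂)|X₁]`. -/
theorem stmt_18
    (M₁ M₂ N : ℕ) (hM₁ : 0 < M₁) (hM₂ : 0 < M₂) (hN : 0 < N)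
    (ν : Measure (XSp M₁ M₂)) (hνp : IsProbabilityMeasure ν)
    (hνmom : MemLp (id : XSp M₁ M₂ → XSp M₁ M₂) 2 ν)
    (A : Submodule ℝ (Euc M₁ → Euc N)) (B : Submodule ℝ (Euc M₂ → Euc N))
    (hAmeas : ∀ φ ∈ A, Measurable φ) (hBmeas : ∀ ψ ∈ B, Measurable ψ)
    (hAL2 : ∀ φ ∈ A, MemLp φ 2 (ν.map Prod.fst))
    (hBL2 : ∀ ψ ∈ B, MemLp ψ 2 (ν.map Prod.snd))
    (φA : Euc M₁ → Euc N) (ψB : Euc M₂ → Euc N) (hφA : φA ∈ A) (hψB : ψB ∈ B)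
    (c : ℝ) (hc : 0 < c)
    (hne : (SetF ν A B φA ψB c).Nonempty)
    (η : (Euc M₁ → Euc N) → Euc M₂ → Euc N)
    (hηB : ∀ φ ∈ A, η φ ∈ B)
    (hηopt : ∀ φ ∈ A, ∀ ψ ∈ B,
      ∫ x, ‖φ x.1 - η φ x.2‖ ^ 2 ∂ν ≤ ∫ x, ‖φ x.1 - ψ x.2‖ ^ 2 ∂ν)
    (hvanish : ∀ φ ∈ A,
      (fun x : XSp M₁ M₂ => φ x.1) =ᵐ[ν]
        condExp (sigmaX1' M₁ M₂) ν (fun x => η φ x.2))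
    (F : Measure (ΩSp M₁ M₂ N)) (hF : F ∈ SetF ν A B φA ψB c)
    (ρBA : XSp M₁ M₂ → Euc N)
    (hρBAmem : ∃ φ ∈ A, ρBA = fun x => φ x.1 - η φ x.2)
    (hρBAmin : ∀ φ ∈ A, MSE F ρBA ≤ MSE F (fun x => φ x.1 - η φ x.2)) :
    condExp (sigmaX1' M₁ M₂) ν ρBA =ᵐ[ν] 0 ∧
    (fun x => condExp (sigmaX1' M₁ M₂) ν (fun y => ψB y.2) x +
        condExp (sigmaX1' M₁ M₂) ν ρBA x) =ᵐ[ν]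
      condExp (sigmaX1' M₁ M₂) ν (fun y => ψB y.2) := by
  haveI := hνp
  obtain ⟨φ, hφ, hρ⟩ := hρBAmem
  have hm : sigmaX1' M₁ M₂ ≤ (inferInstance : MeasurableSpace (XSp M₁ M₂)) :=
    measurable_iff_comap_le.mp measurable_fst
  -- integrability
  have hφint : Integrable (fun x : XSp M₁ M₂ => φ x.1) ν := by
    have h2 : MemLp (fun x : XSp M₁ M₂ => φ x.1) 2 ν := by
      have := (memLp_map_measure_iff
        ((hAmeas φ hφ).stronglyMeasurable.aestronglyMeasurable)
        measurable_fst.aemeasurable).mp (hAL2 φ hφ)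
      exact this
    exact h2.integrable (by norm_num)
  have hηint : Integrable (fun x : XSp M₁ M₂ => η φ x.2) ν := by
    have h2 : MemLp (fun x : XSp M₁ M₂ => η φ x.2) 2 ν := by
      have := (memLp_map_measure_iff
        ((hBmeas _ (hηB φ hφ)).stronglyMeasurable.aestronglyMeasurable)
        measurable_snd.aemeasurable).mp (hBL2 _ (hηB φ hφ))
      exact this
    exact h2.integrable (by norm_num)
  -- condExp of φ∘fst is itself
  have hsm : StronglyMeasurable[sigmaX1' M₁ M₂] (fun x : XSp M₁ M₂ => φ x.1) :=
    (hAmeas φ hφ).stronglyMeasurable.comp_measurable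
      (measurable_iff_comap_le.mpr le_rfl)
  have hce : condExp (sigmaX1' M₁ M₂) ν (fun x : XSp M₁ M₂ => φ x.1)
      = fun x : XSp M₁ M₂ => φ x.1 :=
    condExp_of_stronglyMeasurable hm hsm hφint
  have hsub : condExp (sigmaX1' M₁ M₂) ν ρBA =ᵐ[ν]
      condExp (sigmaX1' M₁ M₂) ν (fun x : XSp M₁ M₂ => φ x.1) -
      condExp (sigmaX1' M₁ M₂) ν (fun x : XSp M₁ M₂ => η φ x.2) := by
    have := condExp_sub (m := sigmaX1' M₁ M₂) (μ := ν) hφint hηint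
    rw [hρ]
    exact this
  have hzero : condExp (sigmaX1' M₁ M₂) ν ρBA =ᵐ[ν] 0 := by
    refine hsub.trans ?_
    have hv := hvanish φ hφ
    rw [hce]
    filter_upwards [hv] with x hx
    simp [Pi.sub_apply, hx]
  refine ⟨hzero, ?_⟩
  filter_upwards [hzero] with x hx
  simp [hx]
end
end
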